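/- arXiv:1401.0173 — 4 statements merged into one kernel-verified Lean document; each statement's English description precedes it below -/
import Mathlib

section
/- Let p be a prime and let μ ≤ λ be partitions with at most n parts such that w(μ,λ) = w for a Dyck word w of length 2n with parameters r, L_0,…,L_r, M_0,…,M_r. Then for every i ∈ {1,…,r−1}: ∏_{k=λ_{L_i+1}+1}^{μ_{M_{i−1}+1}} p^{μ'_k(λ'_k−μ'_k)} · binom(λ'_k−μ'_{k+1}, λ'_k−μ'_k)_{p^{-1}} = (∏_{j=1}^{M_i−M_{i−1}} p^{(M_{i−1}+j)(L_i−M_{i−1}−j)·r_{M_{i−1}+j}}) · binom(M_i−M_{i−1}, J_i^μ)_{p^{-1}} · binom(L_i−M_{i−1}, L_i−M_i)_{p^{-1}}. -/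
noncomputable section

/-- The Gaussian binomial coefficient `binom(a,b)_Y`, as an element of a field,
evaluated at `Y`. -/
def gaussBinom {K : Type*} [Field K] (Y : K) (a b : ℕ) : K :=
  (∏ i ∈ Finset.Icc (a - b + 1) a, (1 - Y ^ i)) / ∏ i ∈ Finset.Icc 1 b, (1 - Y ^ i)

def gaussMultinomAux {K : Type*} [Field K] (Y : K) : ℕ → List ℕ → K
  | _, [] => 1
  | n, i :: is => gaussBinom Y n i * gaussMultinomAux Y i is

/-- The Gaussian multinomial coefficient `binom(n, I)_Y`:
for `I = {i₁ < ⋯ < iₘ}`, this is `binom(n,iₘ)_Y · binom(iₘ,i_{m-1})_Y ⋯ binom(i₂,i₁)_Y`. -/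
def gaussMultinom {K : Type*} [Field K] (Y : K) (n : ℕ) (I : Finset ℕ) : K :=
  gaussMultinomAux Y n ((I.sort (· ≤ ·)).reverse)

def multinomAux : ℕ → List ℕ → ℕ
  | _, [] => 1
  | n, i :: is => n.choose i * multinomAux i is

/-- The ordinary multinomial coefficient `binom(n, I)`, the value of `binom(n,I)_Y` at `Y = 1`. -/
def multinom (n : ℕ) (I : Finset ℕ) : ℕ :=
  multinomAux n ((I.sort (· ≤ ·)).reverse)

/-- The Igusa function `I_h(Y; X_1, …, X_h)`. -/
def igusa {K : Type*} [Field K] (h : ℕ) (Y : K) (X : ℕ → K) : K :=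
  (1 - X h)⁻¹ * ∑ I ∈ (Finset.Icc 1 (h - 1)).powerset,
    gaussMultinom Y h I * ∏ i ∈ I, X i / (1 - X i)

/-- The Igusa function `I_h^∘(Y; X_1, …, X_h)`. -/
def igusaCirc {K : Type*} [Field K] (h : ℕ) (Y : K) (X : ℕ → K) : K :=
  X h * igusa h Y X

/-- The Igusa function at `Y = 1`, `I_h(1; X_1, …, X_h)`, with ordinary multinomials. -/
def igusaOne {K : Type*} [Field K] (h : ℕ) (X : ℕ → K) : K :=
  (1 - X h)⁻¹ * ∑ I ∈ (Finset.Icc 1 (h - 1)).powerset,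
    (multinom h I : K) * ∏ i ∈ I, X i / (1 - X i)

/-- The chains (of arbitrary finite length, including the empty chain) of nonempty proper
subsets of `{1, …, h}`, encoded as finsets of subsets that are totally ordered by inclusion. -/
def chainsOn (h : ℕ) : Finset (Finset (Finset ℕ)) :=
  ((Finset.Icc 1 h).powerset.filter
      (fun I => I ≠ ∅ ∧ I ≠ Finset.Icc 1 h)).powerset.filter
    (fun C => ∀ I ∈ C, ∀ J ∈ C, I ⊆ J ∨ J ⊆ I)

/-- The generalized Igusa function `I^wo_h((X_𝓘)_𝓘)`, with variables indexed by the
nonempty subsets of `{1, …, h}`. -/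
def igusaWO {K : Type*} [Field K] (h : ℕ) (X : Finset ℕ → K) : K :=
  (1 - X (Finset.Icc 1 h))⁻¹ * ∑ C ∈ chainsOn h, ∏ I ∈ C, X I / (1 - X I)

/-- The Igusa function `I_h(Y; X_1, …, X_h)` with power series arguments. -/
def igusaPS (h : ℕ) (Y : ℚ) (X : ℕ → PowerSeries ℚ) : PowerSeries ℚ :=
  (1 - X h)⁻¹ * ∑ I ∈ (Finset.Icc 1 (h - 1)).powerset,
    PowerSeries.C (gaussMultinom Y h I) * ∏ i ∈ I, X i * (1 - X i)⁻¹

/-- The Igusa function `I_h^∘(Y; X_1, …, X_h)` with power series arguments. -/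
def igusaCircPS (h : ℕ) (Y : ℚ) (X : ℕ → PowerSeries ℚ) : PowerSeries ℚ :=
  X h * igusaPS h Y X

/-- The Igusa function `I_h(1; X_1, …, X_h)` with power series arguments. -/
def igusaOnePS (h : ℕ) (X : ℕ → PowerSeries ℚ) : PowerSeries ℚ :=
  (1 - X h)⁻¹ * ∑ I ∈ (Finset.Icc 1 (h - 1)).powerset,
    (multinom h I : PowerSeries ℚ) * ∏ i ∈ I, X i * (1 - X i)⁻¹

/-- The generalized Igusa function `I^wo_h` with power series arguments. -/
def igusaWOPS (h : ℕ) (X : Finset ℕ → PowerSeries ℚ) : PowerSeries ℚ :=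
  (1 - X (Finset.Icc 1 h))⁻¹ * ∑ C ∈ chainsOn h, ∏ I ∈ C, X I * (1 - X I)⁻¹

/-- `lam` encodes a partition `λ_1 ≥ ⋯ ≥ λ_n ≥ 0` with at most `n` parts
(indexed from `1`; the irrelevant values `lam 0` and `lam j` for `j > n` are zero). -/
def IsPartition (n : ℕ) (lam : ℕ → ℕ) : Prop :=
  (∀ j, 1 ≤ j → lam (j + 1) ≤ lam j) ∧ ∀ j, j = 0 ∨ n < j → lam j = 0

/-- `ℓ` encodes an `n`-tuple of non-negative integers, indexed from `1`
(the irrelevant values at `0` and beyond `n` are zero). -/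
def IsTuple (n : ℕ) (ℓ : ℕ → ℕ) : Prop :=
  ∀ j, j = 0 ∨ n < j → ℓ j = 0

/-- The dual partition: `λ'_k = #{j ∈ {1,…,n} : λ_j ≥ k}`. -/
def dualPart (n : ℕ) (lam : ℕ → ℕ) (k : ℕ) : ℕ :=
  ((Finset.Icc 1 n).filter fun j => k ≤ lam j).card

/-- `α(λ, μ; p)`: the number of subgroups of `⊕_{k=1}^n ℤ/p^{λ_k}ℤ` that are isomorphic
to `⊕_{k=1}^n ℤ/p^{μ_k}ℤ`. -/
def alphaCount (p n : ℕ) (lam mu : ℕ → ℕ) : ℕ :=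
  Nat.card {H : AddSubgroup ((j : Fin n) → ZMod (p ^ lam (j.1 + 1))) //
    Nonempty (H ≃+ ((j : Fin n) → ZMod (p ^ mu (j.1 + 1))))}

/-- `β(λ)`: the number of `n`-tuples `ℓ ∈ ℕ₀ⁿ` whose non-increasing rearrangement is `λ`. -/
def betaCount (n : ℕ) (lam : ℕ → ℕ) : ℕ :=
  Nat.card {ℓ : Fin n → ℕ // ∃ σ : Equiv.Perm (Fin n), ∀ j, ℓ (σ j) = lam (j.1 + 1)}

/-- `(r, L, M)` are the parameters of a Dyck word of length `2n`:
`w = 0^{L_1}1^{M_1}0^{L_2-L_1}1^{M_2-M_1}⋯0^{L_r-L_{r-1}}1^{M_r-M_{r-1}}`. -/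
def DyckParams (n r : ℕ) (L M : ℕ → ℕ) : Prop :=
  1 ≤ r ∧ L 0 = 0 ∧ M 0 = 0 ∧ L r = n ∧ M r = n ∧
    ∀ i ∈ Finset.Icc 1 r, L (i - 1) < L i ∧ M (i - 1) < M i ∧ M i ≤ L i

/-- `w(μ, λ) = w` for the Dyck word `w` with parameters `(r, L, M)`:
`λ_{L_i} ≥ μ_{M_{i-1}+1}` for `i ∈ {1,…,r}` and `μ_{M_i} > λ_{L_i+1}` for `i ∈ {1,…,r-1}`. -/
def WMatch (r : ℕ) (L M : ℕ → ℕ) (mu lam : ℕ → ℕ) : Prop :=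
  (∀ i ∈ Finset.Icc 1 r, mu (M (i - 1) + 1) ≤ lam (L i)) ∧
    ∀ i ∈ Finset.Icc 1 (r - 1), lam (L i + 1) < mu (M i)

/-- `t_i = |𝒜_1| + ⋯ + |𝒜_i|` for an ordered set partition `𝒜`. -/
def tpar (𝒜 : ℕ → Finset ℕ) (i : ℕ) : ℕ :=
  ∑ k ∈ Finset.Icc 1 i, (𝒜 k).card

/-- The `j`-th smallest element of a finite set of naturals (`j` counted from `1`). -/
def sortedElt (A : Finset ℕ) (j : ℕ) : ℕ :=
  (A.sort (· ≤ ·)).getD (j - 1) 0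

/-- `ε^{(i)}(𝓘) = L_{i-1} + ∑_{j ∈ 𝓘} f_{a^{(i)}_j}`, where `a^{(i)}_1 < ⋯` are the
elements of `𝒜_i`. -/
def epsA (f L : ℕ → ℕ) (𝒜 : ℕ → Finset ℕ) (i : ℕ) (I : Finset ℕ) : ℕ :=
  L (i - 1) + ∑ j ∈ I, f (sortedElt (𝒜 i) j)

/-- The number of ideals of additive index `m` in the Heisenberg Lie ring `L(R) = R⊕R⊕R`
with bracket `[(a,b,c),(a',b',c')] = (0,0,ab'-a'b)`. -/
def heisenbergIdealCount (R : Type*) [CommRing R] (m : ℕ) : ℕ :=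
  Nat.card {I : AddSubgroup (R × R × R) //
    (∀ x ∈ I, ∀ y : R × R × R, (0, 0, y.1 * x.2.1 - x.1 * y.2.1) ∈ I) ∧ I.index = m}

/-- The explicit rational function `E^f_{w,𝒜}(X,Y)` attached to a Dyck word with parameters
`(r, L, M)` and a compatible ordered set partition `𝒜` of `{1,…,g}`. -/
def Efun {F : Type*} [Field F] (n r : ℕ) (f L M : ℕ → ℕ) (𝒜 : ℕ → Finset ℕ)
    (Xv Yv : F) : F :=
  (∏ i ∈ Finset.Icc 1 r, gaussBinom Xv⁻¹ (L i - M (i - 1)) (L i - M i)) *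
    (∏ i ∈ Finset.Icc 1 r, igusaWO (tpar 𝒜 i - tpar 𝒜 (i - 1))
      (fun I => Xv ^ ((2 * n - M (i - 1) + epsA f L 𝒜 i I) * M (i - 1)) *
        Yv ^ (2 * epsA f L 𝒜 i I + M (i - 1)))) *
    (∏ i ∈ Finset.Icc 1 (r - 1), igusaCirc (M i - M (i - 1)) Xv⁻¹
      (fun j => Xv ^ ((M (i - 1) + j) * (2 * n + L i - (M (i - 1) + j))) *
        Yv ^ (2 * L i + M (i - 1) + j))) *
    igusa (n - M (r - 1)) Xv⁻¹
      (fun j => Xv ^ ((M (r - 1) + j) * (2 * n + L r - (M (r - 1) + j))) *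
        Yv ^ (2 * L r + M (r - 1) + j))

/-- The power series `E^f_{w,𝒜}(p,t)`, the explicit rational function `E^f_{w,𝒜}`
evaluated at `X = p`, `Y = t` and expanded as a power series in `t`. -/
def EfunPS (p n r : ℕ) (f L M : ℕ → ℕ) (𝒜 : ℕ → Finset ℕ) : PowerSeries ℚ :=
  (∏ i ∈ Finset.Icc 1 r,
      PowerSeries.C (gaussBinom ((p : ℚ)⁻¹) (L i - M (i - 1)) (L i - M i))) *
    (∏ i ∈ Finset.Icc 1 r, igusaWOPS (tpar 𝒜 i - tpar 𝒜 (i - 1))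
      (fun I => PowerSeries.C ((p : ℚ) ^ ((2 * n - M (i - 1) + epsA f L 𝒜 i I) * M (i - 1))) *
        PowerSeries.X ^ (2 * epsA f L 𝒜 i I + M (i - 1)))) *
    (∏ i ∈ Finset.Icc 1 (r - 1), igusaCircPS (M i - M (i - 1)) ((p : ℚ)⁻¹)
      (fun j => PowerSeries.C ((p : ℚ) ^ ((M (i - 1) + j) * (2 * n + L i - (M (i - 1) + j)))) *
        PowerSeries.X ^ (2 * L i + M (i - 1) + j))) *
    igusaPS (n - M (r - 1)) ((p : ℚ)⁻¹)
      (fun j => PowerSeries.C ((p : ℚ) ^ ((M (r - 1) + j) * (2 * n + L r - (M (r - 1) + j)))) *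
        PowerSeries.X ^ (2 * L r + M (r - 1) + j))

/-- The set of canonical representatives `(r, L, M, 𝒜)` of all pairs consisting of
a Dyck word `w` of length `2n` and an ordered set partition `𝒜` of `{1,…,g}`
compatible with `w`. -/
def dyckPartData (g n : ℕ) (f : ℕ → ℕ) : Set (ℕ × (ℕ → ℕ) × (ℕ → ℕ) × (ℕ → Finset ℕ)) :=
  {d | DyckParams n d.1 d.2.1 d.2.2.1 ∧
    (∀ j, d.1 < j → d.2.1 j = n ∧ d.2.2.1 j = n) ∧
    (∀ i ∈ Finset.Icc 1 d.1, (d.2.2.2 i).Nonempty) ∧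
    (∀ i ∈ Finset.Icc 1 d.1, ∀ j ∈ Finset.Icc 1 d.1, i ≠ j → Disjoint (d.2.2.2 i) (d.2.2.2 j)) ∧
    (Finset.Icc 1 d.1).biUnion d.2.2.2 = Finset.Icc 1 g ∧
    (∀ i ∈ Finset.Icc 1 d.1, ∑ j ∈ d.2.2.2 i, f j = d.2.1 i - d.2.1 (i - 1)) ∧
    (∀ j, j = 0 ∨ d.1 < j → d.2.2.2 j = ∅)}

/-- The explicit rational function `W^f(X,Y)` expressing the local normal zeta function of
the Heisenberg group at an unramified prime with residue degrees `f_1, …, f_g`. -/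
def Wfun {F : Type*} [Field F] (g n : ℕ) (f : ℕ → ℕ) (Xv Yv : F) : F :=
  (∏ i ∈ Finset.Icc 1 g, (1 - Yv ^ (2 * f i))) *
    (∏ i ∈ Finset.range (2 * n), (1 - Xv ^ i * Yv)⁻¹) *
    ∑ᶠ d ∈ dyckPartData g n f, Efun n d.1 f d.2.1 d.2.2.1 d.2.2.2 Xv Yv
end

/-!
For `λ_{L_i+1} < k ≤ μ_{M_{i-1}+1}` the dual partitions are rigid: `λ'_k = L_i` and
`μ'_k = M_{i-1} + c_k`, where `c` is the dual partition of the block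
`u_j = μ_{M_{i-1}+j}`, `1 ≤ j ≤ M_i - M_{i-1}`. Grouping the powers of `p` by the value
`c_k = j` produces the exponents `r_{M_{i-1}+j}`. Writing each Gaussian binomial through
`Y`-factorials `[t]! = (1 - Y) ⋯ (1 - Yᵗ)`, the product telescopes to
`[L_i - M_{i-1}]! / [L_i - M_i]!` divided by the factorials of the multiplicities
`c_k - c_{k+1}` of the values of `u`; these multiplicities are the lengths of the runs of `u`,
i.e. the block sizes of the Gaussian multinomial `binom(M_i - M_{i-1}, J_i^μ)`.
-/

open Finset

def qFactorial {R : Type*} [CommRing R] (Y : R) (t : ℕ) : R := ∏ i ∈ Icc 1 t, (1 - Y ^ i)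

@[simp]
lemma qFactorial_zero {R : Type*} [CommRing R] (Y : R) : qFactorial Y 0 = 1 := by
  simp [qFactorial]

lemma qFactorial_mul_prod_Icc {R : Type*} [CommRing R] (Y : R) {c a : ℕ} (h : c ≤ a) :
    qFactorial Y c * ∏ i ∈ Icc (c + 1) a, (1 - Y ^ i) = qFactorial Y a := by
  simp only [qFactorial, Icc_add_one_left_eq_Ioc]
  exact prod_Ioc_consecutive _ (Nat.zero_le c) h

-- If `[b]! = 0`, both sides vanish: `[b]!` divides `[a]!`, and `x / 0 = 0`.
lemma gaussBinom_mul_qFactorial_mul_qFactorial {K : Type*} [Field K] (Y : K) {a b : ℕ}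
    (h : b ≤ a) :
    gaussBinom Y a b * (qFactorial Y (a - b) * qFactorial Y b) = qFactorial Y a := by
  by_cases hb : qFactorial Y b = 0
  · rw [hb, mul_zero, mul_zero, ← qFactorial_mul_prod_Icc Y h, hb, zero_mul]
  · rw [gaussBinom, ← qFactorial_mul_prod_Icc Y (Nat.sub_le a b)]
    change _ / qFactorial Y b * _ = _
    field_simp

lemma qFactorial_ne_zero {K : Type*} [Field K] [LinearOrder K] [IsStrictOrderedRing K] {Y : K}
    (h0 : 0 ≤ Y) (h1 : Y < 1) (t : ℕ) : qFactorial Y t ≠ 0 :=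
  prod_ne_zero_iff.2 fun i hi =>
    sub_ne_zero.2 (pow_lt_one₀ h0 h1 (by simp at hi; omega)).ne'

lemma card_filter_Icc_add (P : ℕ → Prop) [DecidablePred P] (q m : ℕ) :
    #{j ∈ Icc 1 (q + m) | P j} = #{j ∈ Icc 1 q | P j} + #{j ∈ Icc 1 m | P (q + j)} := by
  have hsplit : Icc 1 (q + m) = Icc 1 q ∪ (Icc 1 m).map (addLeftEmbedding q) := by
    rw [map_add_left_Icc]
    ext j; simp only [mem_union, mem_Icc]; omega
  rw [hsplit, filter_union, card_union_of_disjoint, filter_map, card_map]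
  · rfl
  · exact disjoint_filter_filter (by
      rw [map_add_left_Icc, disjoint_left]; intro j; simp only [mem_Icc]; omega)

lemma prod_Ico_succ_mul {M : Type*} [CommMonoid M] (f : ℕ → M) {a b : ℕ} (h : a ≤ b) :
    (∏ k ∈ Ico a b, f (k + 1)) * f a = (∏ k ∈ Ico a b, f k) * f b := by
  induction b, h using Nat.le_induction with
  | base => simp
  | succ c hc ih =>
    rw [prod_Ico_succ_top hc, prod_Ico_succ_top hc, mul_right_comm, ih, mul_right_comm]

lemma reverse_sort_insert_of_forall_lt {x : ℕ} {s : Finset ℕ} (h : ∀ y ∈ s, y < x) :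
    ((insert x s).sort (· ≤ ·)).reverse = x :: (s.sort (· ≤ ·)).reverse := by
  apply List.SortedGT.eq_of_mem_iff
  · exact (sortedLT_sort _).reverse
  · rw [List.sortedGT_iff_pairwise, List.pairwise_cons]
    exact ⟨by simpa using h, (sortedLT_sort _).reverse.pairwise⟩
  · simp

lemma gaussMultinom_empty {K : Type*} [Field K] (Y : K) (n : ℕ) : gaussMultinom Y n ∅ = 1 := by
  simp [gaussMultinom, gaussMultinomAux]

lemma gaussMultinom_insert_of_forall_lt {K : Type*} [Field K] (Y : K) (n : ℕ) {x : ℕ}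
    {s : Finset ℕ} (h : ∀ y ∈ s, y < x) :
    gaussMultinom Y n (insert x s) = gaussBinom Y n x * gaussMultinom Y x s := by
  rw [gaussMultinom, reverse_sort_insert_of_forall_lt h, gaussMultinomAux, gaussMultinom]

/-- `J_i^μ = reverseDescents (fun j => μ (M_{i-1} + j)) (M_i - M_{i-1})`: descents of a block,
indexed from its end. -/
def reverseDescents (u : ℕ → ℕ) (m : ℕ) : Finset ℕ :=
  {j ∈ Icc 1 (m - 1) | u (m - j + 1) < u (m - j)}

lemma reverseDescents_add_left (mu : ℕ → ℕ) {N M' : ℕ} (h : N ≤ M') :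
    reverseDescents (fun j => mu (N + j)) (M' - N) =
      {j ∈ Icc 1 (M' - N - 1) | mu (M' - j + 1) < mu (M' - j)} :=
  filter_congr fun j hj => by
    simp only [mem_Icc] at hj
    dsimp only
    rw [show N + (M' - N - j + 1) = M' - j + 1 by omega, show N + (M' - N - j) = M' - j by omega]

section Runs

variable {K : Type*} [Field K] (Y : K) {u : ℕ → ℕ} {m q : ℕ}

lemma reverseDescents_eq_insert (hu : AntitoneOn u (Icc 1 m)) (hqm : q < m)
    (hrun : ∀ j ∈ Icc 1 m, u j = u 1 ↔ j ≤ q) :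
    reverseDescents u m = insert (m - q) (reverseDescents (fun j => u (q + j)) (m - q)) := by
  have hq : 1 ≤ q := (hrun 1 (by simp; omega)).1 rfl
  ext j
  simp only [reverseDescents, mem_insert, mem_filter, mem_Icc]
  rcases lt_trichotomy j (m - q) with hj | rfl | hj
  · rw [show q + (m - q - j + 1) = m - j + 1 by omega, show q + (m - q - j) = m - j by omega]
    omega
  · rw [show m - (m - q) = q by omega]
    have hne : u (q + 1) ≠ u 1 := fun h => by have := (hrun (q + 1) (by simp; omega)).1 h; omega
    have hq1 : u q = u 1 := (hrun q (by simp; omega)).2 le_rfl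
    have := hu (by simp; omega) (by simp; omega) (show q ≤ q + 1 by omega)
    omega
  · refine ⟨fun ⟨hjm, hlt⟩ => ?_, by omega⟩
    have h1 := (hrun (m - j + 1) (by simp; omega)).2 (by omega)
    have h2 := (hrun (m - j) (by simp; omega)).2 (by omega)
    omega

lemma gaussMultinom_reverseDescents_eq (hu : AntitoneOn u (Icc 1 m)) (hqm : q ≤ m)
    (hrun : ∀ j ∈ Icc 1 m, u j = u 1 ↔ j ≤ q) :
    gaussMultinom Y m (reverseDescents u m) = gaussBinom Y m (m - q) *
      gaussMultinom Y (m - q) (reverseDescents (fun j => u (q + j)) (m - q)) := by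
  rcases hqm.lt_or_eq with hqm | rfl
  · rw [reverseDescents_eq_insert hu hqm hrun, gaussMultinom_insert_of_forall_lt]
    intro y hy
    simp only [reverseDescents, mem_filter, mem_Icc] at hy
    omega
  · have hempty : reverseDescents u q = ∅ := filter_eq_empty_iff.2 fun j hj => by
      simp only [mem_Icc] at hj
      rw [(hrun (q - j + 1) (by simp; omega)).2 (by omega),
        (hrun (q - j) (by simp; omega)).2 (by omega)]
      exact lt_irrefl _
    rw [hempty, Nat.sub_self]
    simp [reverseDescents, gaussMultinom_empty, gaussBinom]

lemma prod_qFactorial_card_fiber_eq {s : Finset ℕ} (hs : u 1 ∈ s) (hqm : q ≤ m)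
    (hrun : ∀ j ∈ Icc 1 m, u j = u 1 ↔ j ≤ q) :
    ∏ k ∈ s, qFactorial Y #{j ∈ Icc 1 m | u j = k} =
      qFactorial Y q * ∏ k ∈ s, qFactorial Y #{j ∈ Icc 1 (m - q) | u (q + j) = k} := by
  obtain ⟨m, rfl⟩ := Nat.exists_eq_add_of_le hqm
  have hrun' : ∀ j ∈ Icc 1 q, u j = u 1 := fun j hj =>
    (hrun j (by simp at hj ⊢; omega)).2 (mem_Icc.1 hj).2
  have hhead : #{j ∈ Icc 1 m | u (q + j) = u 1} = 0 := card_eq_zero.2 <| filter_eq_empty_iff.2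
    fun j hj h => by have := (hrun (q + j) (by simp at hj ⊢; omega)).1 h; simp at hj; omega
  rw [Nat.add_sub_cancel_left, ← mul_prod_erase s _ hs, ← mul_prod_erase s _ hs,
    card_filter_Icc_add, hhead, filter_true_of_mem hrun', Nat.card_Icc, add_zero,
    qFactorial_zero, one_mul, Nat.add_sub_cancel]
  congr 1
  refine prod_congr rfl fun k hk => ?_
  rw [card_filter_Icc_add, filter_false_of_mem fun j hj (h : u j = k) =>
    ne_of_mem_erase hk (h ▸ hrun' j hj), card_empty, zero_add]

end Runs

theorem gaussMultinom_reverseDescents_mul_prod {K : Type*} [Field K] (Y : K) {m : ℕ}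
    {u : ℕ → ℕ} {s : Finset ℕ} (hu : AntitoneOn u (Icc 1 m))
    (hs : ∀ j ∈ Icc 1 m, u j ∈ s) :
    gaussMultinom Y m (reverseDescents u m) * ∏ k ∈ s, qFactorial Y #{j ∈ Icc 1 m | u j = k} =
      qFactorial Y m := by
  induction m using Nat.strong_induction_on generalizing u with
  | _ m ih =>
  rcases Nat.eq_zero_or_pos m with rfl | hm
  · simp [reverseDescents, gaussMultinom_empty]
  have h1 : 1 ∈ {j ∈ Icc 1 m | u j = u 1} := by simp; omega
  -- `q` is the length of the first run of `u`; removing that run removes the largest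
  -- element `m - q` of `reverseDescents u m`.
  set q := {j ∈ Icc 1 m | u j = u 1}.max' ⟨1, h1⟩
  have hq := max'_mem _ ⟨1, h1⟩
  simp only [mem_filter, mem_Icc] at hq
  have hrun : ∀ j ∈ Icc 1 m, u j = u 1 ↔ j ≤ q := fun j hj =>
    ⟨fun h => le_max' _ j (mem_filter.2 ⟨hj, h⟩), fun h => le_antisymm
      (hu (by simp; omega) hj (mem_Icc.1 hj).1) (hq.2 ▸ hu hj (by simp; omega) h)⟩
  have hshift := ih (m - q) (by omega) (u := fun j => u (q + j))
    (fun a ha b hb hab => hu (by simp at ha ⊢; omega) (by simp at hb ⊢; omega) (by omega))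
    (fun j hj => hs _ (by simp at hj ⊢; omega))
  have hbinom := gaussBinom_mul_qFactorial_mul_qFactorial Y (Nat.sub_le m q)
  rw [Nat.sub_sub_self hq.1.2] at hbinom
  rw [gaussMultinom_reverseDescents_eq Y hu hq.1.2 hrun,
    prod_qFactorial_card_fiber_eq Y (hs 1 (by simp; omega)) hq.1.2 hrun]
  linear_combination (gaussBinom Y m (m - q) * qFactorial Y q) * hshift + hbinom

section DualPart

variable {m : ℕ} {u : ℕ → ℕ}

lemma dualPart_le (k : ℕ) : dualPart m u k ≤ m :=
  (card_filter_le _ _).trans (by simp)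

lemma dualPart_succ_le (k : ℕ) : dualPart m u (k + 1) ≤ dualPart m u k :=
  card_le_card (monotone_filter_right _ fun _ _ => Nat.le_of_succ_le)

lemma dualPart_sub_dualPart_succ (k : ℕ) :
    dualPart m u k - dualPart m u (k + 1) = #{j ∈ Icc 1 m | u j = k} := by
  rw [dualPart, dualPart,
    ← card_sdiff_of_subset (monotone_filter_right _ fun _ _ => Nat.le_of_succ_le)]
  congr 1; ext j; simp only [mem_sdiff, mem_filter, mem_Icc]; omega

lemma le_dualPart_iff (hu : AntitoneOn u (Icc 1 m)) {j k : ℕ} (hj : j ∈ Icc 1 m) :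
    j ≤ dualPart m u k ↔ k ≤ u j := by
  rw [mem_Icc] at hj
  constructor
  · intro hle
    by_contra! hlt
    have hsub : {i ∈ Icc 1 m | k ≤ u i} ⊆ Icc 1 (j - 1) := fun i hi => by
      simp only [mem_filter, mem_Icc] at hi ⊢
      refine ⟨hi.1.1, ?_⟩
      by_contra! hji
      have := hu (by simp; omega) (by simp; omega) (show j ≤ i by omega)
      omega
    have := card_le_card hsub
    simp [dualPart] at hle this
    omega
  · intro hk
    have hsub : Icc 1 j ⊆ {i ∈ Icc 1 m | k ≤ u i} := fun i hi => by
      simp only [mem_filter, mem_Icc] at hi ⊢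
      exact ⟨⟨hi.1, by omega⟩, hk.trans (hu (by simp; omega) (by simp; omega) hi.2)⟩
    simpa [dualPart] using card_le_card hsub

variable {a : ℕ}

lemma dualPart_mem_Icc (hu : AntitoneOn u (Icc 1 m)) (hm : 0 < m) {k : ℕ}
    (hk : k ∈ Icc (a + 1) (u 1)) : dualPart m u k ∈ Icc 1 m :=
  mem_Icc.2 ⟨(le_dualPart_iff hu (by simp; omega)).2 (mem_Icc.1 hk).2, dualPart_le k⟩

lemma card_filter_dualPart_eq_of_lt (hu : AntitoneOn u (Icc 1 m))
    (ha : ∀ j ∈ Icc 1 m, a < u j) {j : ℕ} (hj : 1 ≤ j) (hjm : j < m) :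
    #{k ∈ Icc (a + 1) (u 1) | dualPart m u k = j} = u j - u (j + 1) := by
  have hfib : {k ∈ Icc (a + 1) (u 1) | dualPart m u k = j} = Ioc (u (j + 1)) (u j) := by
    ext k
    have h1 := le_dualPart_iff hu (k := k) (show j ∈ Icc 1 m by simp; omega)
    have h2 := le_dualPart_iff hu (k := k) (show j + 1 ∈ Icc 1 m by simp; omega)
    have h3 := ha (j + 1) (by simp; omega)
    have h4 := hu (by simp; omega) (by simp; omega) hj
    simp only [mem_filter, mem_Icc, mem_Ioc]
    omega
  rw [hfib, Nat.card_Ioc]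

lemma card_filter_dualPart_eq_self (hu : AntitoneOn u (Icc 1 m)) (hm : 0 < m) :
    #{k ∈ Icc (a + 1) (u 1) | dualPart m u k = m} = u m - a := by
  have hfib : {k ∈ Icc (a + 1) (u 1) | dualPart m u k = m} = Icc (a + 1) (u m) := by
    ext k
    have h1 := le_dualPart_iff hu (k := k) (show m ∈ Icc 1 m by simp; omega)
    have h2 := dualPart_le (m := m) (u := u) k
    have h3 := hu (by simp; omega) (by simp; omega) (show 1 ≤ m from hm)
    simp only [mem_filter, mem_Icc]
    omega
  rw [hfib, Nat.card_Icc]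
  omega

lemma prod_Icc_comp_dualPart {M : Type*} [CommMonoid M] (hu : AntitoneOn u (Icc 1 m))
    (hm : 0 < m) (f : ℕ → M) :
    ∏ k ∈ Icc (a + 1) (u 1), f (dualPart m u k) =
      ∏ j ∈ Icc 1 m, f j ^ #{k ∈ Icc (a + 1) (u 1) | dualPart m u k = j} :=
  (prod_fiberwise_of_maps_to' (fun _ hk => dualPart_mem_Icc hu hm hk) f).symm.trans
    (prod_congr rfl fun _ _ => prod_const _)

lemma prod_gaussBinom_dualPart {K : Type*} [Field K] {Y : K} (hY : ∀ t, qFactorial Y t ≠ 0)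
    (hu : AntitoneOn u (Icc 1 m)) (hm : 0 < m) (ha : ∀ j ∈ Icc 1 m, a < u j)
    {A : ℕ} (hmA : m ≤ A) :
    ∏ k ∈ Icc (a + 1) (u 1), gaussBinom Y (A - dualPart m u (k + 1)) (A - dualPart m u k) =
      gaussMultinom Y m (reverseDescents u m) * gaussBinom Y A (A - m) := by
  have hcore := gaussMultinom_reverseDescents_mul_prod Y (s := Icc (a + 1) (u 1)) hu
    fun j hj => mem_Icc.2 ⟨ha j hj, hu (by simp; omega) hj (mem_Icc.1 hj).1⟩
  have hB := gaussBinom_mul_qFactorial_mul_qFactorial Y (Nat.sub_le A m)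
  rw [Nat.sub_sub_self hmA] at hB
  set F : ℕ → K := fun k => qFactorial Y (A - dualPart m u k)
  set fib : ℕ → K := fun k => qFactorial Y #{j ∈ Icc 1 m | u j = k}
  have hfactor : ∀ k, gaussBinom Y (A - dualPart m u (k + 1)) (A - dualPart m u k) *
      (fib k * F k) = F (k + 1) := fun k => by
    have h1 := dualPart_le (m := m) (u := u) k
    have h2 := dualPart_succ_le (m := m) (u := u) k
    have := gaussBinom_mul_qFactorial_mul_qFactorial Y (show A - dualPart m u k ≤
      A - dualPart m u (k + 1) by omega)
    rwa [show A - dualPart m u (k + 1) - (A - dualPart m u k) =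
      dualPart m u k - dualPart m u (k + 1) by omega, dualPart_sub_dualPart_succ] at this
  have hprod := prod_congr rfl fun k (_ : k ∈ Icc (a + 1) (u 1)) => hfactor k
  rw [prod_mul_distrib, prod_mul_distrib] at hprod
  have htel := prod_Ico_succ_mul F (show a + 1 ≤ u 1 + 1 by have := ha 1 (by simp; omega); omega)
  have hFa : dualPart m u (a + 1) = m := le_antisymm (dualPart_le _)
    ((le_dualPart_iff hu (by simp; omega)).2 (ha m (by simp; omega)))
  have hFb : dualPart m u (u 1 + 1) = 0 := by
    by_contra h
    have := (le_dualPart_iff hu (j := 1) (k := u 1 + 1) (by simp; omega)).1 (by omega)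
    omega
  simp only [F, Ico_add_one_right_eq_Icc, hFa, hFb, Nat.sub_zero] at htel
  have hX : (∏ k ∈ Icc (a + 1) (u 1), fib k) * (∏ k ∈ Icc (a + 1) (u 1), F k) *
      qFactorial Y (A - m) ≠ 0 :=
    mul_ne_zero (mul_ne_zero (prod_ne_zero_iff.2 fun _ _ => hY _)
      (prod_ne_zero_iff.2 fun _ _ => hY _)) (hY _)
  refine mul_right_cancel₀ hX ?_
  linear_combination qFactorial Y (A - m) * hprod + htel -
    (∏ k ∈ Icc (a + 1) (u 1), F k) * hB -
    gaussBinom Y A (A - m) * (∏ k ∈ Icc (a + 1) (u 1), F k) * qFactorial Y (A - m) * hcore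

end DualPart

lemma dualPart_eq_add_dualPart {n N m k : ℕ} {mu : ℕ → ℕ} (hn : N + m ≤ n)
    (htop : ∀ j ∈ Icc 1 N, k ≤ mu j) (hbot : ∀ j, N + m < j → mu j < k) :
    dualPart n mu k = N + dualPart m (fun j => mu (N + j)) k := by
  obtain ⟨t, rfl⟩ := Nat.exists_eq_add_of_le hn
  rw [dualPart, add_assoc, card_filter_Icc_add, card_filter_Icc_add, filter_true_of_mem htop,
    filter_false_of_mem (s := Icc 1 t) fun j hj => not_le.2 (hbot _ (by simp at hj; omega))]
  simp [dualPart]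

lemma prod_pow_mul_gaussBinom_dualPart {K : Type*} [Field K] {X : K}
    (hX : ∀ t, qFactorial X⁻¹ t ≠ 0) {n N Ltot m a : ℕ} {lam mu u e : ℕ → ℕ}
    (hu : AntitoneOn u (Icc 1 m)) (hm : 0 < m) (ha : ∀ j ∈ Icc 1 m, a < u j)
    (hmL : N + m ≤ Ltot) (hlam : ∀ k ∈ Icc (a + 1) (u 1), dualPart n lam k = Ltot)
    (hmu : ∀ k ∈ Icc (a + 1) (u 1 + 1), dualPart n mu k = N + dualPart m u k)
    (he : ∀ j, 1 ≤ j → j < m → e j = u j - u (j + 1)) (hem : e m = u m - a) :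
    ∏ k ∈ Icc (a + 1) (u 1), X ^ (dualPart n mu k * (dualPart n lam k - dualPart n mu k)) *
        gaussBinom X⁻¹ (dualPart n lam k - dualPart n mu (k + 1))
          (dualPart n lam k - dualPart n mu k) =
      (∏ j ∈ Icc 1 m, X ^ ((N + j) * (Ltot - N - j) * e j)) *
        gaussMultinom X⁻¹ m (reverseDescents u m) *
          gaussBinom X⁻¹ (Ltot - N) (Ltot - N - m) := by
  set f : ℕ → K := fun j => X ^ ((N + j) * (Ltot - N - j))
  have hfactor : ∀ k ∈ Icc (a + 1) (u 1),
      X ^ (dualPart n mu k * (dualPart n lam k - dualPart n mu k)) *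
          gaussBinom X⁻¹ (dualPart n lam k - dualPart n mu (k + 1))
            (dualPart n lam k - dualPart n mu k) =
        f (dualPart m u k) *
          gaussBinom X⁻¹ (Ltot - N - dualPart m u (k + 1)) (Ltot - N - dualPart m u k) :=
    fun k hk => by
      have hk' := mem_Icc.1 hk
      rw [hlam k hk, hmu k (by simp; omega), hmu (k + 1) (by simp; omega)]
      simp only [f, Nat.sub_sub]
  rw [prod_congr rfl hfactor, prod_mul_distrib, prod_Icc_comp_dualPart hu hm,
    prod_gaussBinom_dualPart hX hu hm ha (by omega), ← mul_assoc]
  congr 2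
  refine prod_congr rfl fun j hj => ?_
  rw [← pow_mul]
  rcases (mem_Icc.1 hj).2.lt_or_eq with hjm | rfl
  · rw [card_filter_dualPart_eq_of_lt hu ha (mem_Icc.1 hj).1 hjm, he j (mem_Icc.1 hj).1 hjm]
  · rw [card_filter_dualPart_eq_self hu hm, hem]

section DyckWord

variable {n r : ℕ} {L M lam mu : ℕ → ℕ}

lemma IsPartition.apply_le_apply (h : IsPartition n lam) {s t : ℕ} (hs : 1 ≤ s)
    (hst : s ≤ t) : lam t ≤ lam s :=
  antitoneOn_of_succ_le Set.ordConnected_Ici (fun j _ hj _ => h.1 j hj)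
    (Set.mem_Ici.2 hs) (Set.mem_Ici.2 (hs.trans hst)) hst

lemma DyckParams.L_lt_L (h : DyckParams n r L M) {s t : ℕ} (hst : s < t) (ht : t ≤ r) :
    L s < L t :=
  strictMonoOn_Iic_of_lt_succ
    (fun c hc => by simpa using (h.2.2.2.2.2 (c + 1) (by simp; omega)).1)
    (Set.mem_Iic.2 (by omega)) (Set.mem_Iic.2 ht) hst

lemma DyckParams.M_lt_M (h : DyckParams n r L M) {s t : ℕ} (hst : s < t) (ht : t ≤ r) :
    M s < M t :=
  strictMonoOn_Iic_of_lt_succ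
    (fun c hc => by simpa using (h.2.2.2.2.2 (c + 1) (by simp; omega)).2.1)
    (Set.mem_Iic.2 (by omega)) (Set.mem_Iic.2 ht) hst

lemma DyckParams.M_le_M (h : DyckParams n r L M) {s t : ℕ} (hst : s ≤ t) (ht : t ≤ r) :
    M s ≤ M t := by
  rcases hst.lt_or_eq with hst | rfl
  exacts [(h.M_lt_M hst ht).le, le_rfl]

lemma DyckParams.M_le (h : DyckParams n r L M) {t : ℕ} (ht : t ≤ r) : M t ≤ n :=
  h.2.2.2.2.1 ▸ h.M_le_M ht le_rfl

lemma DyckParams.L_le (h : DyckParams n r L M) {t : ℕ} (ht : t ≤ r) : L t ≤ n := by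
  rcases ht.lt_or_eq with ht | rfl
  exacts [h.2.2.2.1 ▸ (h.L_lt_L ht le_rfl).le, h.2.2.2.1.le]

lemma DyckParams.M_le_L (h : DyckParams n r L M) {t : ℕ} (ht : t ∈ Icc 1 r) : M t ≤ L t :=
  (h.2.2.2.2.2 t ht).2.2

lemma DyckParams.M_ne_of_lt_of_lt (h : DyckParams n r L M) {i j : ℕ} (hi : i ≤ r)
    (h1 : M (i - 1) < j) (h2 : j < M i) : ∀ t ∈ Icc 1 r, M t ≠ j := by
  intro t ht
  rw [mem_Icc] at ht
  rcases lt_or_ge t i with hti | hti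
  · have := h.M_le_M (show t ≤ i - 1 by omega) (by omega)
    omega
  · have := h.M_le_M hti ht.2
    omega

section Block

variable {i : ℕ} (hDyck : DyckParams n r L M) (hlam : IsPartition n lam)
  (hw : WMatch r L M mu lam) (hi : i ∈ Icc 1 (r - 1))
include hDyck hlam hw hi

lemma WMatch.lt_mu_of_le (hmu : IsPartition n mu) {j : ℕ} (hj : j ∈ Icc 1 (M (i - 1))) :
    mu (M (i - 1) + 1) < mu j := by
  simp only [mem_Icc] at hi hj
  have hi2 : 2 ≤ i := by
    by_contra
    rw [show i - 1 = 0 by omega, hDyck.2.2.1] at hj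
    omega
  have h1 := hw.2 (i - 1) (by simp; omega)
  have h2 := hw.1 i (by simp; omega)
  have h3 := hlam.apply_le_apply (by omega)
    (show L (i - 1) + 1 ≤ L i from hDyck.L_lt_L (show i - 1 < i by omega) (by omega))
  have h4 := hmu.apply_le_apply hj.1 hj.2
  omega

lemma WMatch.mu_le_of_lt (hmu : IsPartition n mu) {j : ℕ} (hj : M i < j) :
    mu j ≤ lam (L i + 1) := by
  simp only [mem_Icc] at hi
  have h1 := hw.1 (i + 1) (by simp; omega)
  rw [Nat.add_sub_cancel] at h1
  have h2 := hlam.apply_le_apply (by omega)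
    (show L i + 1 ≤ L (i + 1) from hDyck.L_lt_L (Nat.lt_succ_self i) (by omega))
  have h3 := hmu.apply_le_apply (by omega) (show M i + 1 ≤ j from hj)
  omega

lemma WMatch.dualPart_lam_eq {k : ℕ}
    (hk : k ∈ Icc (lam (L i + 1) + 1) (mu (M (i - 1) + 1))) : dualPart n lam k = L i := by
  simp only [mem_Icc] at hi hk
  have h1 := hw.1 i (by simp; omega)
  have htop : ∀ j ∈ Icc 1 (L i), k ≤ lam j := fun j hj => by
    have := hlam.apply_le_apply (mem_Icc.1 hj).1 (mem_Icc.1 hj).2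
    omega
  have hbot : ∀ j, L i + 0 < j → lam j < k := fun j hj => by
    have := hlam.apply_le_apply (by omega) (show L i + 1 ≤ j by omega)
    omega
  simpa [dualPart] using dualPart_eq_add_dualPart (hDyck.L_le (by omega)) htop hbot

lemma WMatch.dualPart_mu_eq (hmu : IsPartition n mu) {k : ℕ}
    (hk : k ∈ Icc (lam (L i + 1) + 1) (mu (M (i - 1) + 1) + 1)) :
    dualPart n mu k = M (i - 1) + dualPart (M i - M (i - 1)) (fun j => mu (M (i - 1) + j)) k := by
  have hi' := mem_Icc.1 hi
  have h1 := hDyck.M_lt_M (show i - 1 < i by omega) (by omega)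
  have h2 := hDyck.M_le (show i ≤ r by omega)
  simp only [mem_Icc] at hk
  refine dualPart_eq_add_dualPart (by omega) (fun j hj => ?_) (fun j hj => ?_)
  · have := hw.lt_mu_of_le hDyck hlam hi hmu hj
    omega
  · have := hw.mu_le_of_lt hDyck hlam hi hmu (show M i < j by omega)
    omega

end Block

end DyckWord

theorem birkhoff_mu_piece_general (p n r : ℕ) (hp : p.Prime) (L M : ℕ → ℕ)
    (hDyck : DyckParams n r L M) (lam mu : ℕ → ℕ)
    (hlam : IsPartition n lam) (hmu : IsPartition n mu)
    (hw : WMatch r L M mu lam)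
    (rs : ℕ → ℕ)
    (hrs1 : ∀ j ∈ Finset.Icc 1 n, (∀ i ∈ Finset.Icc 1 r, M i ≠ j) →
      rs j = mu j - mu (j + 1))
    (hrs2 : ∀ i ∈ Finset.Icc 1 r, rs (M i) = mu (M i) - lam (L i + 1))
    (i : ℕ) (hi : i ∈ Finset.Icc 1 (r - 1)) :
    ∏ k ∈ Finset.Icc (lam (L i + 1) + 1) (mu (M (i - 1) + 1)),
        ((p : ℚ) ^ (dualPart n mu k * (dualPart n lam k - dualPart n mu k)) *
          gaussBinom ((p : ℚ)⁻¹) (dualPart n lam k - dualPart n mu (k + 1))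
            (dualPart n lam k - dualPart n mu k)) =
      (∏ j ∈ Finset.Icc 1 (M i - M (i - 1)),
          (p : ℚ) ^ ((M (i - 1) + j) * (L i - M (i - 1) - j) * rs (M (i - 1) + j))) *
        gaussMultinom ((p : ℚ)⁻¹) (M i - M (i - 1))
          ((Finset.Icc 1 (M i - M (i - 1) - 1)).filter
            fun j => mu (M i - j + 1) < mu (M i - j)) *
        gaussBinom ((p : ℚ)⁻¹) (L i - M (i - 1)) (L i - M i) := by
  have hi' := mem_Icc.1 hi
  have hNM := hDyck.M_lt_M (show i - 1 < i by omega) (by omega)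
  have hML := hDyck.M_le_L (show i ∈ Icc 1 r by simp; omega)
  have hMn := hDyck.M_le (show i ≤ r by omega)
  have hMi : M (i - 1) + (M i - M (i - 1)) = M i := by omega
  have hu : AntitoneOn (fun j => mu (M (i - 1) + j)) (Icc 1 (M i - M (i - 1))) :=
    fun x hx y _ hxy => hmu.apply_le_apply (by simp at hx; omega) (by omega)
  have hua : ∀ j ∈ Icc 1 (M i - M (i - 1)), lam (L i + 1) < mu (M (i - 1) + j) := fun j hj => by
    simp only [mem_Icc] at hj
    have := hmu.apply_le_apply (by omega) (show M (i - 1) + j ≤ M i by omega)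
    have := hw.2 i hi
    omega
  have hX : ∀ t, qFactorial ((p : ℚ)⁻¹) t ≠ 0 :=
    qFactorial_ne_zero (by positivity) (inv_lt_one_of_one_lt₀ (by exact_mod_cast hp.one_lt))
  rw [prod_pow_mul_gaussBinom_dualPart hX hu (by omega) hua (by omega)
      (fun k hk => hw.dualPart_lam_eq hDyck hlam hi hk)
      (fun k hk => hw.dualPart_mu_eq hDyck hlam hi hmu hk)
      (fun j hj hjm => hrs1 _ (by simp; omega)
        (hDyck.M_ne_of_lt_of_lt (i := i) (by omega) (by omega) (by omega)))
      (by rw [hMi, hrs2 i (by simp; omega)]),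
    reverseDescents_add_left mu hNM.le,
    show L i - M (i - 1) - (M i - M (i - 1)) = L i - M i by omega]

/-- Lemma on the `μ`-pieces of Birkhoff's formula: for partitions `μ ≤ λ` with
`w(μ,λ) = w` for the Dyck word `w` with parameters `(r, L, M)`, and for `i ∈ {1,…,r-1}`,
`∏_{k=λ_{L_i+1}+1}^{μ_{M_{i-1}+1}} p^{μ'_k(λ'_k-μ'_k)} binom(λ'_k-μ'_{k+1}, λ'_k-μ'_k)_{p⁻¹}
 = (∏_{j=1}^{M_i-M_{i-1}} p^{(M_{i-1}+j)(L_i-M_{i-1}-j) r_{M_{i-1}+j}})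
   · binom(M_i-M_{i-1}, J_i^μ)_{p⁻¹} · binom(L_i-M_{i-1}, L_i-M_i)_{p⁻¹}`. -/
theorem birkhoff_mu_piece (p n r : ℕ) (hp : p.Prime) (L M : ℕ → ℕ)
    (hDyck : DyckParams n r L M) (lam mu : ℕ → ℕ)
    (hlam : IsPartition n lam) (hmu : IsPartition n mu) (hle : ∀ j, mu j ≤ lam j)
    (hw : WMatch r L M mu lam)
    (rs : ℕ → ℕ)
    (hrs1 : ∀ j ∈ Finset.Icc 1 n, (∀ i ∈ Finset.Icc 1 r, M i ≠ j) →
      rs j = mu j - mu (j + 1))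
    (hrs2 : ∀ i ∈ Finset.Icc 1 r, rs (M i) = mu (M i) - lam (L i + 1))
    (i : ℕ) (hi : i ∈ Finset.Icc 1 (r - 1)) :
    ∏ k ∈ Finset.Icc (lam (L i + 1) + 1) (mu (M (i - 1) + 1)),
        ((p : ℚ) ^ (dualPart n mu k * (dualPart n lam k - dualPart n mu k)) *
          gaussBinom ((p : ℚ)⁻¹) (dualPart n lam k - dualPart n mu (k + 1))
            (dualPart n lam k - dualPart n mu k)) =
      (∏ j ∈ Finset.Icc 1 (M i - M (i - 1)),
          (p : ℚ) ^ ((M (i - 1) + j) * (L i - M (i - 1) - j) * rs (M (i - 1) + j))) *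
        gaussMultinom ((p : ℚ)⁻¹) (M i - M (i - 1))
          ((Finset.Icc 1 (M i - M (i - 1) - 1)).filter
            fun j => mu (M i - j + 1) < mu (M i - j)) *
        gaussBinom ((p : ℚ)⁻¹) (L i - M (i - 1)) (L i - M i) :=
  birkhoff_mu_piece_general p n r hp L M hDyck lam mu hlam hmu hw rs hrs1 hrs2 i hi
end

section
/- Let p be a prime and let μ ≤ λ be partitions with at most n parts such that w(μ,λ) = w for a Dyck word w of length 2n with parameters r, L_0,…,L_r, M_0,…,M_r. Then for every i ∈ {1,…,r−1}: ∏_{k=μ_{M_{i−1}+1}+1}^{λ_{L_{i−1}+1}} p^{μ'_k(λ'_k−μ'_k)} · binom(λ'_k−μ'_{k+1}, λ'_k−μ'_k)_{p^{-1}} = ∏_{j=1}^{L_i−L_{i−1}} p^{M_{i−1}(L_{i−1}−M_{i−1}+j)·s_{L_{i−1}+j}} (in particular all the Gaussian binomial coefficients on the left-hand side equal 1). -/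
/-! For `μ_{M_{i-1}+1} < k ≤ λ_{L_{i-1}+1}` the condition `w(μ,λ) = w` pins the dual part
`μ'_k` (and `μ'_{k+1}`) to `M_{i-1}`, so each Gaussian binomial is `binom(x,x) = 1` and the left
side is `p ^ (M_{i-1} ∑_k (λ'_k - M_{i-1}))`. Summing `λ'_k` over this range of columns counts the
first `L_{i-1}` rows in full and the rows `L_{i-1}+1, …, L_i` partially (no later row reaches the
range), and Abel summation turns the partial counts into
`∑_j (L_{i-1} - M_{i-1} + j) s_{L_{i-1}+j}`. -/

open Finset

lemma strictMonoOn_Iic_of_sub_one_lt {f : ℕ → ℕ} {r : ℕ}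
    (h : ∀ i ∈ Icc 1 r, f (i - 1) < f i) : StrictMonoOn f (Set.Iic r) :=
  strictMonoOn_of_lt_add_one Set.ordConnected_Iic fun a _ _ ha => by
    simpa using h (a + 1) (mem_Icc.2 ⟨by omega, Set.mem_Iic.1 ha⟩)

lemma IsPartition.antitoneOn {n : ℕ} {lam : ℕ → ℕ} (h : IsPartition n lam) :
    AntitoneOn lam (Set.Ici 1) :=
  antitoneOn_of_add_one_le Set.ordConnected_Ici fun j _ hj _ => h.1 j hj

namespace DyckParams

variable {n r : ℕ} {L M : ℕ → ℕ}

lemma strictMonoOn_L (h : DyckParams n r L M) : StrictMonoOn L (Set.Iic r) :=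
  strictMonoOn_Iic_of_sub_one_lt fun i hi => (h.2.2.2.2.2 i hi).1

lemma strictMonoOn_M (h : DyckParams n r L M) : StrictMonoOn M (Set.Iic r) :=
  strictMonoOn_Iic_of_sub_one_lt fun i hi => (h.2.2.2.2.2 i hi).2.1

lemma L_le_s2 (h : DyckParams n r L M) {i : ℕ} (hi : i ≤ r) : L i ≤ n :=
  h.2.2.2.1 ▸ h.strictMonoOn_L.monotoneOn (Set.mem_Iic.2 hi) (Set.mem_Iic.2 le_rfl) hi

lemma M_le_L_s2 (h : DyckParams n r L M) {i : ℕ} (hi : i ≤ r) : M i ≤ L i := by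
  rcases Nat.eq_zero_or_pos i with rfl | hi0
  · simp [h.2.2.1]
  · exact (h.2.2.2.2.2 i (mem_Icc.2 ⟨hi0, hi⟩)).2.2

lemma L_ne_of_lt_of_lt (h : DyckParams n r L M) {i j : ℕ} (hi : i ∈ Icc 1 r)
    (hj₀ : L (i - 1) < j) (hj₁ : j < L i) : ∀ i' ∈ Icc 1 r, L i' ≠ j := by
  intro i' hi' hij
  obtain ⟨hi1, hir⟩ := mem_Icc.1 hi
  obtain ⟨-, hi'r⟩ := mem_Icc.1 hi'
  have hmono := h.strictMonoOn_L.monotoneOn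
  rcases Nat.lt_or_ge i' i with hlt | hge
  · have := hmono (Set.mem_Iic.2 hi'r) (Set.mem_Iic.2 (by omega : i - 1 ≤ r))
      (by omega : i' ≤ i - 1)
    omega
  · have := hmono (Set.mem_Iic.2 hir) (Set.mem_Iic.2 hi'r) hge
    omega

end DyckParams

lemma le_dualPart {n m k : ℕ} {lam : ℕ → ℕ} (hm : m ≤ n) (hk : ∀ j ∈ Icc 1 m, k ≤ lam j) :
    m ≤ dualPart n lam k := by
  have hsub : Icc 1 m ⊆ (Icc 1 n).filter (k ≤ lam ·) := fun j hj =>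
    mem_filter.2 ⟨Icc_subset_Icc_right hm hj, hk j hj⟩
  simpa [dualPart] using card_le_card hsub

lemma dualPart_eq {n m k : ℕ} {lam : ℕ → ℕ} (hlam : AntitoneOn lam (Set.Ici 1)) (hm : m ≤ n)
    (hk : ∀ j ∈ Icc 1 m, k ≤ lam j) (hk' : lam (m + 1) < k) : dualPart n lam k = m := by
  have hfilter : (Icc 1 n).filter (k ≤ lam ·) = Icc 1 m := by
    ext j
    simp only [mem_filter, mem_Icc]
    constructor
    · rintro ⟨⟨hj1, -⟩, hkj⟩
      by_contra hmj
      have := hlam (Set.mem_Ici.2 (by omega : 1 ≤ m + 1)) (Set.mem_Ici.2 hj1) (by omega)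
      omega
    · exact fun hj => ⟨⟨hj.1, hj.2.trans hm⟩, hk j (mem_Icc.2 hj)⟩
  simp [dualPart, hfilter]

lemma sum_dualPart_Icc (n a b : ℕ) (lam : ℕ → ℕ) :
    ∑ k ∈ Icc (a + 1) b, dualPart n lam k = ∑ j ∈ Icc 1 n, (min b (lam j) - a) := by
  simp only [dualPart, card_filter]
  rw [sum_comm]
  refine sum_congr rfl fun j _ => ?_
  have hfilter : (Icc (a + 1) b).filter (· ≤ lam j) = Icc (a + 1) (min b (lam j)) := by
    ext k
    simp only [mem_filter, mem_Icc]
    omega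
  rw [← card_filter, hfilter, Nat.card_Icc]
  omega

lemma gaussBinom_self_of_lt_one {K : Type*} [Field K] [LinearOrder K] [IsStrictOrderedRing K]
    {Y : K} (h0 : 0 ≤ Y) (h1 : Y < 1) (e : ℕ) : gaussBinom Y e e = 1 := by
  rw [gaussBinom, Nat.sub_self, zero_add]
  refine div_self (prod_ne_zero_iff.2 fun i hi => sub_ne_zero.2 ?_)
  exact (pow_lt_one₀ h0 h1 (by simp at hi; omega)).ne'

lemma sum_dualPart_Icc_of_le {n l₀ l₁ a : ℕ} {lam : ℕ → ℕ} (hlam : AntitoneOn lam (Set.Ici 1))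
    (h₀₁ : l₀ ≤ l₁) (h₁n : l₁ ≤ n) (ha : lam (l₁ + 1) ≤ a) :
    ∑ k ∈ Icc (a + 1) (lam (l₀ + 1)), dualPart n lam k =
      l₀ * (lam (l₀ + 1) - a) + ∑ j ∈ Ioc l₀ l₁, (lam j - a) := by
  have hanti : ∀ {x y}, 1 ≤ x → x ≤ y → lam y ≤ lam x := fun hx hxy =>
    hlam (Set.mem_Ici.2 hx) (Set.mem_Ici.2 (hx.trans hxy)) hxy
  rw [sum_dualPart_Icc, show Icc 1 n = Ioc 0 n from Icc_add_one_left_eq_Ioc 0 n,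
    ← sum_Ioc_consecutive _ (Nat.zero_le l₁) h₁n,
    ← sum_Ioc_consecutive _ (Nat.zero_le l₀) h₀₁]
  have hhead : ∀ j ∈ Ioc 0 l₀, min (lam (l₀ + 1)) (lam j) - a = lam (l₀ + 1) - a := fun j hj => by
    have := hanti (mem_Ioc.1 hj).1 (by simp at hj; omega : j ≤ l₀ + 1)
    rw [min_eq_left this]
  have hblock : ∀ j ∈ Ioc l₀ l₁, min (lam (l₀ + 1)) (lam j) - a = lam j - a := fun j hj => by
    rw [min_eq_right (hanti (by omega) (mem_Ioc.1 hj).1)]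
  have htail : ∀ j ∈ Ioc l₁ n, min (lam (l₀ + 1)) (lam j) - a = 0 := fun j hj => by
    have := hanti (by omega : 1 ≤ l₁ + 1) (mem_Ioc.1 hj).1
    omega
  rw [sum_congr rfl hhead, sum_congr rfl hblock, sum_congr rfl htail]
  simp

lemma sum_Ioc_sub_mul_sub_succ {R : Type*} [CommRing R] (B : ℕ → R) (c : R) {l₀ l₁ : ℕ}
    (h : l₀ ≤ l₁) :
    ∑ j ∈ Ioc l₀ l₁, (j - c) * (B j - B (j + 1)) =
      (l₀ - c) * (B (l₀ + 1) - B (l₁ + 1)) + ∑ j ∈ Ioc l₀ l₁, (B j - B (l₁ + 1)) := by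
  induction l₁, h using Nat.le_induction with
  | base => simp
  | succ l₁ h ih =>
    have hsplit : ∀ k ∈ Ioc l₀ l₁, B k - B (l₁ + 1 + 1) =
        (B k - B (l₁ + 1)) + (B (l₁ + 1) - B (l₁ + 1 + 1)) := fun _ _ => by ring
    rw [sum_Ioc_succ_top (by omega), sum_Ioc_succ_top (by omega), ih, sum_congr rfl hsplit,
      sum_add_distrib, sum_const, Nat.card_Ioc, nsmul_eq_mul, Nat.cast_sub h]
    push_cast
    ring

lemma sum_Icc_one_sub_add_eq_sum_Ioc {β : Type*} [AddCommMonoid β] (f : ℕ → β) {l₀ l₁ : ℕ}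
    (h : l₀ ≤ l₁) : ∑ j ∈ Icc 1 (l₁ - l₀), f (l₀ + j) = ∑ j ∈ Ioc l₀ l₁, f j := by
  rw [← Icc_add_one_left_eq_Ioc, ← Nat.add_sub_of_le h, ← map_add_left_Icc, sum_map,
    Nat.add_sub_cancel_left]
  rfl

lemma sum_dualPart_sub_eq_sum_mul {n l₀ l₁ m a : ℕ} {lam s : ℕ → ℕ}
    (hlam : AntitoneOn lam (Set.Ici 1)) (h₀₁ : l₀ < l₁) (h₁n : l₁ ≤ n) (hm : m ≤ l₀)
    (ha : a ≤ lam l₁) (ha' : lam (l₁ + 1) ≤ a)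
    (hs : ∀ j, l₀ < j → j < l₁ → s j = lam j - lam (j + 1)) (hs' : s l₁ = lam l₁ - a) :
    ∑ k ∈ Icc (a + 1) (lam (l₀ + 1)), (dualPart n lam k - m) =
      ∑ j ∈ Icc 1 (l₁ - l₀), (l₀ - m + j) * s (l₀ + j) := by
  set b := lam (l₀ + 1)
  have hanti : ∀ {x y}, 1 ≤ x → x ≤ y → lam y ≤ lam x := fun hx hxy =>
    hlam (Set.mem_Ici.2 hx) (Set.mem_Ici.2 (hx.trans hxy)) hxy
  have hab : a ≤ b := ha.trans (hanti (by omega) (by omega))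
  have hshift : ∑ j ∈ Icc 1 (l₁ - l₀), (l₀ - m + j) * s (l₀ + j) =
      ∑ j ∈ Ioc l₀ l₁, (j - m) * s j := by
    rw [← sum_Icc_one_sub_add_eq_sum_Ioc _ h₀₁.le]
    exact sum_congr rfl fun j _ => by rw [Nat.sub_add_comm hm]
  let B : ℕ → ℤ := fun j => if j ≤ l₁ then lam j else a
  have hB : ∀ j ∈ Ioc l₀ l₁, B j = lam j := fun j hj => if_pos (mem_Ioc.1 hj).2
  have hB₀ : B (l₀ + 1) = b := if_pos (by omega)
  have hB₁ : B (l₁ + 1) = a := if_neg (by omega)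
  have hsB : ∀ j ∈ Ioc l₀ l₁, (((j - m) * s j : ℕ) : ℤ) = (j - m) * (B j - B (j + 1)) := by
    intro j hj
    obtain ⟨hj₀, hj₁⟩ := mem_Ioc.1 hj
    rw [Nat.cast_mul, Nat.cast_sub (by omega)]
    rcases hj₁.lt_or_eq with hlt | rfl
    · rw [hs j hj₀ hlt, Nat.cast_sub (hanti (by omega) (by omega)), hB j hj,
        hB (j + 1) (mem_Ioc.2 ⟨by omega, hlt⟩)]
    · rw [hs', Nat.cast_sub ha, hB j hj, hB₁]
  have hge : ∀ k ∈ Icc (a + 1) b, ((dualPart n lam k - m : ℕ) : ℤ) = dualPart n lam k - m := by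
    intro k hk
    refine Nat.cast_sub (hm.trans (le_dualPart (by omega) fun j hj => ?_))
    exact (mem_Icc.1 hk).2.trans (hanti (mem_Icc.1 hj).1 (by simp at hj; omega))
  have hsum : ((∑ k ∈ Icc (a + 1) b, dualPart n lam k : ℕ) : ℤ) =
      l₀ * (b - a) + ∑ j ∈ Ioc l₀ l₁, (B j - a) := by
    rw [sum_dualPart_Icc_of_le hlam h₀₁.le h₁n ha', Nat.cast_add, Nat.cast_mul, Nat.cast_sub hab,
      Nat.cast_sum]
    refine congrArg _ (sum_congr rfl fun j hj => ?_)
    rw [hB j hj, Nat.cast_sub (ha.trans (hanti (by simp at hj; omega) (mem_Ioc.1 hj).2))]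
  rw [hshift, ← Nat.cast_inj (R := ℤ), Nat.cast_sum, Nat.cast_sum, sum_congr rfl hge,
    sum_congr rfl hsB, sum_Ioc_sub_mul_sub_succ B (m : ℤ) h₀₁.le, sum_sub_distrib, ← Nat.cast_sum,
    hsum, sum_const, Nat.card_Icc, hB₀, hB₁, nsmul_eq_mul]
  push_cast [Nat.cast_sub hab]
  ring

lemma dualPart_eq_of_WMatch {n r : ℕ} {L M mu lam : ℕ → ℕ} (hDyck : DyckParams n r L M)
    (hmu : IsPartition n mu) (hw : WMatch r L M mu lam) {i k : ℕ} (hi : i ∈ Icc 1 r)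
    (hk : k ∈ Icc (mu (M (i - 1) + 1) + 1) (lam (L (i - 1) + 1) + 1)) :
    dualPart n mu k = M (i - 1) := by
  obtain ⟨hi1, hir⟩ := mem_Icc.1 hi
  obtain ⟨hk₀, hk₁⟩ := mem_Icc.1 hk
  have hMn : M (i - 1) ≤ n := (hDyck.M_le_L_s2 (by omega)).trans (hDyck.L_le_s2 (by omega))
  refine dualPart_eq hmu.antitoneOn hMn (fun j hj => ?_) (by omega)
  obtain ⟨hj1, hjM⟩ := mem_Icc.1 hj
  have hi2 : 2 ≤ i := by
    by_contra
    rw [show i - 1 = 0 by omega, hDyck.2.2.1] at hjM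
    omega
  have hgap := hw.2 (i - 1) (mem_Icc.2 ⟨by omega, by omega⟩)
  have := hmu.antitoneOn (Set.mem_Ici.2 hj1) (Set.mem_Ici.2 (hj1.trans hjM)) hjM
  omega

theorem birkhoff_lambda_piece_general (p n r : ℕ) (hp : p.Prime) (L M : ℕ → ℕ)
    (hDyck : DyckParams n r L M) (lam mu : ℕ → ℕ)
    (hlam : IsPartition n lam) (hmu : IsPartition n mu)
    (hw : WMatch r L M mu lam)
    (ss : ℕ → ℕ)
    (hss1 : ∀ j ∈ Finset.Icc 1 n, (∀ i ∈ Finset.Icc 1 r, L i ≠ j) →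
      ss j = lam j - lam (j + 1))
    (hss2 : ∀ i ∈ Finset.Icc 1 r, ss (L i) = lam (L i) - mu (M (i - 1) + 1))
    (i : ℕ) (hi : i ∈ Finset.Icc 1 (r - 1)) :
    (∏ k ∈ Finset.Icc (mu (M (i - 1) + 1) + 1) (lam (L (i - 1) + 1)),
        ((p : ℚ) ^ (dualPart n mu k * (dualPart n lam k - dualPart n mu k)) *
          gaussBinom ((p : ℚ)⁻¹) (dualPart n lam k - dualPart n mu (k + 1))
            (dualPart n lam k - dualPart n mu k)) =
      ∏ j ∈ Finset.Icc 1 (L i - L (i - 1)),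
        (p : ℚ) ^ (M (i - 1) * (L (i - 1) - M (i - 1) + j) * ss (L (i - 1) + j))) ∧
    ∀ k ∈ Finset.Icc (mu (M (i - 1) + 1) + 1) (lam (L (i - 1) + 1)),
      gaussBinom ((p : ℚ)⁻¹) (dualPart n lam k - dualPart n mu (k + 1))
          (dualPart n lam k - dualPart n mu k) = 1 := by
  obtain ⟨hi1, hir⟩ := mem_Icc.1 hi
  have hi' : i ∈ Icc 1 r := mem_Icc.2 ⟨hi1, by omega⟩
  have hmu' : ∀ k ∈ Icc (mu (M (i - 1) + 1) + 1) (lam (L (i - 1) + 1) + 1),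
      dualPart n mu k = M (i - 1) := fun k hk => dualPart_eq_of_WMatch hDyck hmu hw hi' hk
  have hbinom : ∀ k ∈ Icc (mu (M (i - 1) + 1) + 1) (lam (L (i - 1) + 1)),
      gaussBinom ((p : ℚ)⁻¹) (dualPart n lam k - dualPart n mu (k + 1))
        (dualPart n lam k - dualPart n mu k) = 1 := fun k hk => by
    obtain ⟨hk₀, hk₁⟩ := mem_Icc.1 hk
    rw [hmu' k (mem_Icc.2 ⟨hk₀, by omega⟩), hmu' (k + 1) (mem_Icc.2 ⟨by omega, by omega⟩)]
    exact gaussBinom_self_of_lt_one (by positivity)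
      (inv_lt_one_of_one_lt₀ (by exact_mod_cast hp.one_lt)) _
  refine ⟨?_, hbinom⟩
  have hL : L (i - 1) < L i := hDyck.strictMonoOn_L (by simp; omega) (by simp; omega) (by omega)
  have hM : M (i - 1) < M i := hDyck.strictMonoOn_M (by simp; omega) (by simp; omega) (by omega)
  have hgap : lam (L i + 1) ≤ mu (M (i - 1) + 1) :=
    ((hw.2 i hi).trans_le (hmu.antitoneOn (by simp) (by simp; omega) hM)).le
  have hexp := sum_dualPart_sub_eq_sum_mul hlam.antitoneOn hL (hDyck.L_le_s2 (by omega))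
    (hDyck.M_le_L_s2 (by omega)) (hw.1 i hi') hgap
    (fun j hj₀ hj₁ => hss1 j (mem_Icc.2 ⟨by omega, (hDyck.L_le_s2 (by omega)).trans' hj₁.le⟩)
      (hDyck.L_ne_of_lt_of_lt hi' hj₀ hj₁)) (hss2 i hi')
  rw [prod_congr rfl fun k hk => by rw [hbinom k hk, mul_one, hmu' k (by simp at hk ⊢; omega)],
    prod_pow_eq_pow_sum, prod_pow_eq_pow_sum, ← mul_sum, hexp, mul_sum]
  simp only [mul_assoc]

/-- Lemma on the `λ`-pieces of Birkhoff's formula: for partitions `μ ≤ λ` with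
`w(μ,λ) = w` for the Dyck word `w` with parameters `(r, L, M)`, and for `i ∈ {1,…,r-1}`,
`∏_{k=μ_{M_{i-1}+1}+1}^{λ_{L_{i-1}+1}} p^{μ'_k(λ'_k-μ'_k)} binom(λ'_k-μ'_{k+1}, λ'_k-μ'_k)_{p⁻¹}
 = ∏_{j=1}^{L_i-L_{i-1}} p^{M_{i-1}(L_{i-1}-M_{i-1}+j) s_{L_{i-1}+j}}`;
in particular all the Gaussian binomial coefficients on the left-hand side equal `1`. -/
theorem birkhoff_lambda_piece (p n r : ℕ) (hp : p.Prime) (L M : ℕ → ℕ)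
    (hDyck : DyckParams n r L M) (lam mu : ℕ → ℕ)
    (hlam : IsPartition n lam) (hmu : IsPartition n mu) (hle : ∀ j, mu j ≤ lam j)
    (hw : WMatch r L M mu lam)
    (ss : ℕ → ℕ)
    (hss1 : ∀ j ∈ Finset.Icc 1 n, (∀ i ∈ Finset.Icc 1 r, L i ≠ j) →
      ss j = lam j - lam (j + 1))
    (hss2 : ∀ i ∈ Finset.Icc 1 r, ss (L i) = lam (L i) - mu (M (i - 1) + 1))
    (i : ℕ) (hi : i ∈ Finset.Icc 1 (r - 1)) :
    (∏ k ∈ Finset.Icc (mu (M (i - 1) + 1) + 1) (lam (L (i - 1) + 1)),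
        ((p : ℚ) ^ (dualPart n mu k * (dualPart n lam k - dualPart n mu k)) *
          gaussBinom ((p : ℚ)⁻¹) (dualPart n lam k - dualPart n mu (k + 1))
            (dualPart n lam k - dualPart n mu k)) =
      ∏ j ∈ Finset.Icc 1 (L i - L (i - 1)),
        (p : ℚ) ^ (M (i - 1) * (L (i - 1) - M (i - 1) + j) * ss (L (i - 1) + j))) ∧
    ∀ k ∈ Finset.Icc (mu (M (i - 1) + 1) + 1) (lam (L (i - 1) + 1)),
      gaussBinom ((p : ℚ)⁻¹) (dualPart n lam k - dualPart n mu (k + 1))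
          (dualPart n lam k - dualPart n mu k) = 1 :=
  birkhoff_lambda_piece_general p n r hp L M hDyck lam mu hlam hmu hw ss hss1 hss2 i hi
end

section
/- For every h ∈ ℕ, the generalized Igusa function satisfies the functional equation I^wo_h((X_𝓘^{−1})_𝓘) = (−1)^h · X_{{1,…,h}} · I^wo_h((X_𝓘)_𝓘) in the field of rational functions over ℚ in the 2^h − 1 variables X_𝓘. -/
/-!
Write `F_{A,B}(x)` (`chainSum x A B`) for the sum, over the chains in the open interval
`(A, B)` of the Boolean lattice, of `∏ x_I`. Since `X⁻¹ / (1 - X⁻¹) = -1 - X / (1 - X)`, the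
functional equation is the reciprocity `F_{A,B}(-1 - x) = (-1)^{|B \ A| + 1} F_{A,B}(x)`
for `A ⊊ B`, at `A = ∅`. Splitting off the least element of a chain gives
`F_{A,B} = 1 + ∑_{A < J < B} x_J F_{J,B}`; substituting this recursion into itself once and
summing the signs with `∑_{A < J < B} (-1)^{|B \ J|} = -(-1)^{|B \ A|} - 1` (the Möbius
function of the Boolean lattice) proves the reciprocity by induction on `|B \ A|`.
-/

open Finset

section IntervalChains

variable {α R : Type*} [DecidableEq α] [CommRing R]

def chainsIoo (A B : Finset α) : Finset (Finset (Finset α)) :=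
  (Ioo A B).powerset.filter fun C => ∀ I ∈ C, ∀ J ∈ C, I ⊆ J ∨ J ⊆ I

def chainSum (x : Finset α → R) (A B : Finset α) : R :=
  ∑ C ∈ chainsIoo A B, ∏ I ∈ C, x I

variable {A B J : Finset α} {C : Finset (Finset α)}

lemma mem_chainsIoo :
    C ∈ chainsIoo A B ↔ C ⊆ Ioo A B ∧ ∀ I ∈ C, ∀ J ∈ C, I ⊆ J ∨ J ⊆ I := by
  rw [chainsIoo, mem_filter, mem_powerset]

lemma ssubset_of_mem_chainsIoo (hC : C ∈ chainsIoo A B) {I : Finset α} (hI : I ∈ C) :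
    A ⊂ I :=
  (mem_Ioo.1 ((mem_chainsIoo.1 hC).1 hI)).1

lemma notMem_of_mem_chainsIoo (hC : C ∈ chainsIoo J B) : J ∉ C :=
  fun hJ => (ssubset_of_mem_chainsIoo hC hJ).ne rfl

lemma insert_inj_of_mem_chainsIoo {J' : Finset α} {C' : Finset (Finset α)}
    (hC : C ∈ chainsIoo J B) (hC' : C' ∈ chainsIoo J' B) (heq : insert J C = insert J' C') :
    J = J' ∧ C = C' := by
  have hJJ' : J = J' := by
    by_contra hne
    have hJ : J ∈ insert J' C' := heq ▸ mem_insert_self J C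
    have hJ' : J' ∈ insert J C := heq ▸ mem_insert_self J' C'
    rcases mem_insert.1 hJ with h | hJC'
    · exact hne h
    rcases mem_insert.1 hJ' with h | hJ'C
    · exact hne h.symm
    exact ssubset_asymm (ssubset_of_mem_chainsIoo hC hJ'C) (ssubset_of_mem_chainsIoo hC' hJC')
  subst hJJ'
  refine ⟨rfl, ?_⟩
  rw [← erase_insert (notMem_of_mem_chainsIoo hC), heq,
    erase_insert (notMem_of_mem_chainsIoo hC')]

lemma insert_mem_chainsIoo (hJ : J ∈ Ioo A B) (hC : C ∈ chainsIoo J B) :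
    insert J C ∈ chainsIoo A B := by
  obtain ⟨hCsub, hCchain⟩ := mem_chainsIoo.1 hC
  refine mem_chainsIoo.2 ⟨insert_subset hJ fun I hI => ?_, ?_⟩
  · exact mem_Ioo.2 ⟨(mem_Ioo.1 hJ).1.trans (ssubset_of_mem_chainsIoo hC hI),
      (mem_Ioo.1 (hCsub hI)).2⟩
  · simp only [mem_insert]
    rintro I (rfl | hI) K (rfl | hK)
    · exact Or.inl subset_rfl
    · exact Or.inl (ssubset_of_mem_chainsIoo hC hK).subset
    · exact Or.inr (ssubset_of_mem_chainsIoo hC hI).subset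
    · exact hCchain I hI K hK

lemma exists_insert_eq_of_mem_chainsIoo (hC : C ∈ chainsIoo A B) (hne : C.Nonempty) :
    ∃ J ∈ Ioo A B, ∃ C' ∈ chainsIoo J B, insert J C' = C := by
  obtain ⟨hCsub, hCchain⟩ := mem_chainsIoo.1 hC
  obtain ⟨J, hJmin⟩ := exists_minimal_of_wellFoundedLT (· ∈ C) hne
  have hJlt : ∀ I ∈ C.erase J, J ⊂ I := fun I hI => by
    obtain ⟨hIJ, hIC⟩ := mem_erase.1 hI
    rcases hCchain J hJmin.prop I hIC with hJI | hIJ'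
    · exact ssubset_of_subset_of_ne hJI hIJ.symm
    · exact absurd (subset_antisymm hIJ' (hJmin.le_of_le hIC hIJ')) hIJ
  refine ⟨J, hCsub hJmin.prop, C.erase J, mem_chainsIoo.2 ⟨fun I hI => ?_, ?_⟩,
    insert_erase hJmin.prop⟩
  · exact mem_Ioo.2 ⟨hJlt I hI, (mem_Ioo.1 (hCsub (mem_of_mem_erase hI))).2⟩
  · exact fun I hI K hK => hCchain I (mem_of_mem_erase hI) K (mem_of_mem_erase hK)

lemma chainSum_eq_one_add (x : Finset α → R) (A B : Finset α) :
    chainSum x A B = 1 + ∑ J ∈ Ioo A B, x J * chainSum x J B := by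
  have hempty : (∅ : Finset (Finset α)) ∈ chainsIoo A B := by simp [mem_chainsIoo]
  rw [chainSum, ← add_sum_erase _ _ hempty, prod_empty]
  congr 1
  simp only [chainSum, mul_sum]
  rw [sum_sigma', eq_comm]
  refine sum_bij (fun p _ => insert p.1 p.2) ?_ ?_ ?_ ?_
  · rintro ⟨J, C⟩ hp
    obtain ⟨hJ, hC⟩ := mem_sigma.1 hp
    exact mem_erase.2 ⟨insert_ne_empty J C, insert_mem_chainsIoo hJ hC⟩
  · rintro ⟨J, C⟩ hp ⟨J', C'⟩ hp' heq
    obtain ⟨rfl, rfl⟩ :=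
      insert_inj_of_mem_chainsIoo (mem_sigma.1 hp).2 (mem_sigma.1 hp').2 heq
    rfl
  · intro C hC
    obtain ⟨hne, hC⟩ := mem_erase.1 hC
    obtain ⟨J, hJ, C', hC', rfl⟩ :=
      exists_insert_eq_of_mem_chainsIoo hC (nonempty_iff_ne_empty.2 hne)
    exact ⟨⟨J, C'⟩, mem_sigma.2 ⟨hJ, hC'⟩, rfl⟩
  · rintro ⟨J, C⟩ hp
    exact (prod_insert (notMem_of_mem_chainsIoo (mem_sigma.1 hp).2)).symm

lemma sum_Icc_neg_one_pow_card_sdiff (hAB : A ⊂ B) :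
    ∑ J ∈ Icc A B, (-1 : R) ^ #(B \ J) = 0 := by
  have hsum :
      ∑ J ∈ Icc A B, (-1 : R) ^ #(B \ J) = ∑ K ∈ (B \ A).powerset, (-1 : R) ^ #K := by
    refine sum_nbij' (B \ ·) (B \ ·) (fun J hJ => ?_) (fun K hK => ?_) (fun J hJ => ?_)
      (fun K hK => ?_) fun _ _ => rfl
    · exact mem_powerset.2 (sdiff_subset_sdiff subset_rfl (mem_Icc.1 hJ).1)
    · have hKBA := mem_powerset.1 hK
      exact mem_Icc.2 ⟨fun a ha => mem_sdiff.2 ⟨hAB.subset ha,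
        fun haK => (mem_sdiff.1 (hKBA haK)).2 ha⟩, sdiff_subset⟩
    · exact Finset.sdiff_sdiff_eq_self (mem_Icc.1 hJ).2
    · exact Finset.sdiff_sdiff_eq_self ((mem_powerset.1 hK).trans sdiff_subset)
  have h := congrArg (Int.cast : ℤ → R)
    (sum_powerset_neg_one_pow_card_of_nonempty (sdiff_nonempty.2 hAB.not_subset))
  push_cast at h
  rw [hsum, h]

lemma sum_Ioo_neg_one_pow_card_sdiff (hAB : A ⊂ B) :
    ∑ J ∈ Ioo A B, (-1 : R) ^ #(B \ J) = -(-1) ^ #(B \ A) - 1 := by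
  have h := sum_Icc_neg_one_pow_card_sdiff (R := R) hAB
  rw [Icc_eq_cons_Ioc hAB.le, sum_cons, Ioc_eq_cons_Ioo hAB, sum_cons, Finset.sdiff_self,
    card_empty, pow_zero] at h
  linear_combination h

lemma neg_one_pow_card_sdiff_mul (hAJ : A ⊆ J) (hJB : J ⊆ B) :
    (-1 : R) ^ #(B \ J) * (-1) ^ #(J \ A) = (-1) ^ #(B \ A) := by
  rw [← pow_add, card_sdiff_of_subset hAJ, card_sdiff_of_subset hJB,
    card_sdiff_of_subset (hAJ.trans hJB)]
  have := card_le_card hAJ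
  have := card_le_card hJB
  congr 1
  omega

lemma sum_Ioo_neg_one_pow_card_sdiff_of_subset {K : Finset α} (hAK : A ⊂ K) (hKB : K ⊆ B) :
    ∑ J ∈ Ioo A K, (-1 : R) ^ #(B \ J) = -(-1) ^ #(B \ A) - (-1) ^ #(B \ K) := by
  calc ∑ J ∈ Ioo A K, (-1 : R) ^ #(B \ J)
      = (-1) ^ #(B \ K) * ∑ J ∈ Ioo A K, (-1 : R) ^ #(K \ J) := by
        rw [mul_sum]
        refine sum_congr rfl fun J hJ => ?_
        rw [neg_one_pow_card_sdiff_mul (mem_Ioo.1 hJ).2.le hKB]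
    _ = -(-1) ^ #(B \ A) - (-1) ^ #(B \ K) := by
        rw [sum_Ioo_neg_one_pow_card_sdiff hAK, ← neg_one_pow_card_sdiff_mul hAK.le hKB]
        ring

lemma sum_Ioo_neg_one_pow_mul_chainSum (x : Finset α → R) (hAB : A ⊂ B) :
    ∑ J ∈ Ioo A B, (-1) ^ #(B \ J) * chainSum x J B =
      -(-1) ^ #(B \ A) - 1 - (-1) ^ #(B \ A) * ∑ J ∈ Ioo A B, x J * chainSum x J B
        - ∑ J ∈ Ioo A B, (-1) ^ #(B \ J) * (x J * chainSum x J B) := by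
  calc ∑ J ∈ Ioo A B, (-1) ^ #(B \ J) * chainSum x J B
      = ∑ J ∈ Ioo A B, (-1 : R) ^ #(B \ J)
          + ∑ J ∈ Ioo A B, ∑ K ∈ Ioo J B, (-1) ^ #(B \ J) * (x K * chainSum x K B) := by
        rw [← sum_add_distrib]
        refine sum_congr rfl fun J _ => ?_
        rw [chainSum_eq_one_add x J B, mul_add, mul_one, mul_sum]
    _ = ∑ J ∈ Ioo A B, (-1 : R) ^ #(B \ J)
          + ∑ K ∈ Ioo A B, (∑ J ∈ Ioo A K, (-1) ^ #(B \ J)) * (x K * chainSum x K B) := by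
        simp only [sum_mul]
        congr 1
        refine sum_comm' fun J K => ?_
        simp only [mem_Ioo]
        exact ⟨fun h => ⟨⟨h.1.1, h.2.1⟩, h.1.1.trans h.2.1, h.2.2⟩,
          fun h => ⟨⟨h.1.1, h.1.2.trans h.2.2⟩, h.1.2, h.2.2⟩⟩
    _ = _ := by
        rw [sum_Ioo_neg_one_pow_card_sdiff hAB,
          sum_congr rfl fun K hK => by
            rw [sum_Ioo_neg_one_pow_card_sdiff_of_subset (mem_Ioo.1 hK).1 (mem_Ioo.1 hK).2.le]]
        simp only [sub_mul, neg_mul, sum_sub_distrib, sum_neg_distrib, mul_sum]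
        ring

theorem chainSum_neg_one_sub (x : Finset α → R) (hAB : A ⊂ B) :
    chainSum (fun I => -1 - x I) A B = (-1) ^ (#(B \ A) + 1) * chainSum x A B := by
  induction hn : #(B \ A) using Nat.strong_induction_on generalizing A with
  | _ n ih =>
    have hrec : ∀ J ∈ Ioo A B, (-1 - x J) * chainSum (fun I => -1 - x I) J B =
        (-1) ^ #(B \ J) * chainSum x J B + (-1) ^ #(B \ J) * (x J * chainSum x J B) := by
      intro J hJ
      obtain ⟨hAJ, hJB⟩ := mem_Ioo.1 hJ
      have hlt : #(B \ J) < n := by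
        have := card_lt_card hAJ
        have := card_le_card hJB.le
        rw [← hn, card_sdiff_of_subset hJB.le, card_sdiff_of_subset hAB.le]
        omega
      rw [ih _ hlt hJB rfl]
      ring
    rw [chainSum_eq_one_add, chainSum_eq_one_add x, sum_congr rfl hrec, sum_add_distrib,
      sum_Ioo_neg_one_pow_mul_chainSum x hAB, hn]
    ring

end IntervalChains

lemma MvPolynomial.X_ne_one {σ R : Type*} [CommSemiring R] [Nontrivial R] (s : σ) :
    (MvPolynomial.X s : MvPolynomial σ R) ≠ 1 := fun h =>
  one_ne_zero (α := R) (by simpa using congrArg (MvPolynomial.coeff 0) h.symm)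

section IgusaWO

variable {K : Type*} [Field K]

lemma inv_div_one_sub_inv {X : K} (h0 : X ≠ 0) (h1 : X ≠ 1) :
    X⁻¹ / (1 - X⁻¹) = -1 - X / (1 - X) := by
  have h1' : 1 - X ≠ 0 := sub_ne_zero.2 h1.symm
  field_simp
  ring

lemma one_sub_inv_inv {X : K} (h0 : X ≠ 0) (h1 : X ≠ 1) :
    (1 - X⁻¹)⁻¹ = -X * (1 - X)⁻¹ := by
  have h1' : 1 - X ≠ 0 := sub_ne_zero.2 h1.symm
  field_simp
  ring

lemma chainsOn_eq_chainsIoo (h : ℕ) : chainsOn h = chainsIoo ∅ (Icc 1 h) := by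
  rw [chainsOn, chainsIoo]
  congr 2
  ext I
  simp only [mem_filter, mem_powerset, mem_Ioo, ssubset_iff_subset_ne, empty_subset, true_and]
  tauto

lemma igusaWO_eq_chainSum (h : ℕ) (X : Finset ℕ → K) :
    igusaWO h X = (1 - X (Icc 1 h))⁻¹ * chainSum (fun I => X I / (1 - X I)) ∅ (Icc 1 h) := by
  rw [igusaWO, chainsOn_eq_chainsIoo, chainSum]

theorem igusaWO_inv {h : ℕ} (hh : 0 < h) (X : Finset ℕ → K) (h0 : ∀ I, X I ≠ 0)
    (h1 : ∀ I, X I ≠ 1) :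
    igusaWO h (fun I => (X I)⁻¹) = (-1) ^ h * X (Icc 1 h) * igusaWO h X := by
  have hne : (∅ : Finset ℕ) ⊂ Icc 1 h := empty_ssubset.2 (nonempty_Icc.2 hh)
  have hcard : #(Icc 1 h \ ∅) = h := by simp
  simp only [igusaWO_eq_chainSum, inv_div_one_sub_inv (h0 _) (h1 _),
    one_sub_inv_inv (h0 _) (h1 _), chainSum_neg_one_sub _ hne, hcard]
  ring

end IgusaWO

/-- Functional equation for the generalized Igusa function:
`I^wo_h((X_𝓘⁻¹)_𝓘) = (-1)^h · X_{{1,…,h}} · I^wo_h((X_𝓘)_𝓘)` in the field of rational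
functions over `ℚ` in the variables `X_𝓘`. -/
theorem igusaWO_funEq (h : ℕ) (hh : 0 < h) :
    igusaWO h (fun I : Finset ℕ =>
        (algebraMap (MvPolynomial (Finset ℕ) ℚ) (FractionRing (MvPolynomial (Finset ℕ) ℚ))
          (MvPolynomial.X I))⁻¹) =
      (-1) ^ h *
        algebraMap (MvPolynomial (Finset ℕ) ℚ) (FractionRing (MvPolynomial (Finset ℕ) ℚ))
          (MvPolynomial.X (Finset.Icc 1 h)) *
        igusaWO h (fun I : Finset ℕ =>
          algebraMap (MvPolynomial (Finset ℕ) ℚ) (FractionRing (MvPolynomial (Finset ℕ) ℚ))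
            (MvPolynomial.X I)) := by
  have hinj := IsFractionRing.injective (MvPolynomial (Finset ℕ) ℚ)
    (FractionRing (MvPolynomial (Finset ℕ) ℚ))
  refine igusaWO_inv hh _ (fun I => ?_) (fun I => ?_)
  · exact (map_ne_zero_iff _ hinj).2 (MvPolynomial.X_ne_zero I)
  · exact (map_ne_one_iff _ hinj).2 (MvPolynomial.X_ne_one I)
end

section
/- For every h ∈ ℕ, the Igusa function I_h^∘ satisfies the functional equation I_h^∘(Y^{−1}; X_1^{−1},…,X_h^{−1}) = (−1)^h · X_h^{−1} · Y^{−h(h−1)/2} · I_h^∘(Y; X_1,…,X_h) in the field of rational functions ℚ(Y,X_1,…,X_h). -/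
/-!
Write `I_h^∘ = X_h (1 - X_h)⁻¹ S_h(Y; x)` with `x_i = X_i / (1 - X_i)` and
`S_h(Y; x) = ∑_{I ⊆ {1,…,h-1}} binom(h,I)_Y ∏_{i ∈ I} x_i`. Inverting `X_i` turns `x_i` into
`-1 - x_i`, and inverting `Y` turns `binom(h,k)_Y` into `Y^{-k(h-k)} binom(h,k)_Y`, so the theorem
reduces to `S_h(Y⁻¹; -1 - x) = -(-1)^h Y^{-C(h,2)} S_h(Y; x)`. Splitting `I` at its largest element
gives `S_h = 1 + ∑_{0<k<h} binom(h,k)_Y x_k S_k`, and the reduced identity follows by strong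
induction on `h`: after the induction hypothesis and
`binom(h,k)_Y binom(k,j)_Y = binom(h,j)_Y binom(h-j,k-j)_Y`, the coefficient of each `x_j S_j`
(and the constant term) reduces to the alternating identity
`∑_{k=0}^{n} (-1)^k Y^{C(n-k,2)} binom(n,k)_Y = 0` for `n ≥ 1`, a consequence of the q-Pascal rule.
-/

open Finset

lemma Nat.choose_two_add (a b : ℕ) : (a + b).choose 2 = a.choose 2 + b.choose 2 + a * b := by
  induction b with
  | zero => simp
  | succ b ih =>
    rw [← add_assoc, Nat.choose_succ_succ', Nat.choose_succ_succ' b, ih, Nat.choose_one_right,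
      Nat.choose_one_right]
    ring

lemma Finset.reverse_sort_le {α : Type*} [LinearOrder α] (s : Finset α) :
    (s.sort (· ≤ ·)).reverse = s.sort (· ≥ ·) :=
  List.Perm.eq_of_pairwise' (r := (· ≥ ·))
    (List.pairwise_reverse.2 (s.pairwise_sort _)) (s.pairwise_sort _)
    ((List.reverse_perm _).trans ((s.sort_perm_toList _).trans (s.sort_perm_toList _).symm))

lemma Finset.sum_powerset_Ico_eq_add_sum_insert {M : Type*} [AddCommMonoid M] (a n : ℕ)
    (f : Finset ℕ → M) :
    ∑ I ∈ (Ico a n).powerset, f I =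
      f ∅ + ∑ k ∈ Ico a n, ∑ I ∈ (Ico a k).powerset, f (insert k I) := by
  induction n with
  | zero => simp
  | succ n ih =>
    rcases lt_or_ge n a with hn | hn
    · simp [Ico_eq_empty_of_le (Nat.succ_le_of_lt hn)]
    rw [Nat.Ico_succ_right_eq_insert_Ico hn, sum_powerset_insert (by simp), ih,
      sum_insert (by simp), add_assoc, add_comm (∑ I ∈ _, f (insert n I))]

section GaussBinom

variable {K : Type*} [Field K] {Y : K}

lemma one_sub_pow_ne_zero_of_not_isOfFinOrder (hY : ¬IsOfFinOrder Y) {i : ℕ} (hi : 0 < i) :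
    1 - Y ^ i ≠ 0 :=
  sub_ne_zero.2 fun h => hY (isOfFinOrder_iff_pow_eq_one.2 ⟨i, hi, h.symm⟩)

lemma not_isOfFinOrder_inv (hY : ¬IsOfFinOrder Y) : ¬IsOfFinOrder Y⁻¹ := by
  simpa only [isOfFinOrder_iff_pow_eq_one, inv_pow, inv_eq_one] using hY

variable (Y) in
def qPochhammer (n : ℕ) : K := ∏ i ∈ Icc 1 n, (1 - Y ^ i)

lemma qPochhammer_zero : qPochhammer Y 0 = 1 := rfl

lemma qPochhammer_succ (n : ℕ) : qPochhammer Y (n + 1) = qPochhammer Y n * (1 - Y ^ (n + 1)) :=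
  prod_Icc_succ_top (by omega) _

lemma qPochhammer_ne_zero (hY : ¬IsOfFinOrder Y) (n : ℕ) : qPochhammer Y n ≠ 0 :=
  prod_ne_zero_iff.2 fun _ hi => one_sub_pow_ne_zero_of_not_isOfFinOrder hY (mem_Icc.1 hi).1

lemma qPochhammer_inv (hY0 : Y ≠ 0) (n : ℕ) :
    qPochhammer Y⁻¹ n = (-1) ^ n * (Y ^ (n + 1).choose 2)⁻¹ * qPochhammer Y n := by
  induction n with
  | zero => simp [qPochhammer_zero]
  | succ n ih =>
    rw [qPochhammer_succ, qPochhammer_succ, ih, Nat.choose_succ_succ' (n + 1), Nat.choose_one_right,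
      inv_pow]
    field_simp
    ring

lemma gaussBinom_eq_div (hY : ¬IsOfFinOrder Y) {a b : ℕ} (hb : b ≤ a) :
    gaussBinom Y a b = qPochhammer Y a / (qPochhammer Y b * qPochhammer Y (a - b)) := by
  have hsplit : qPochhammer Y a =
      qPochhammer Y (a - b) * ∏ i ∈ Icc (a - b + 1) a, (1 - Y ^ i) := by
    rw [qPochhammer, qPochhammer, ← prod_union]
    · congr 1; ext; simp only [mem_Icc, mem_union]; omega
    · exact disjoint_left.2 fun i hi hi' => by simp only [mem_Icc] at hi hi'; omega
  have := qPochhammer_ne_zero hY (a - b)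
  rw [gaussBinom, hsplit, ← qPochhammer]
  field_simp

lemma gaussBinom_zero_right (a : ℕ) : gaussBinom Y a 0 = 1 := by
  simp [gaussBinom]

lemma gaussBinom_self (hY : ¬IsOfFinOrder Y) (a : ℕ) : gaussBinom Y a a = 1 := by
  rw [gaussBinom_eq_div hY le_rfl, Nat.sub_self, qPochhammer_zero, mul_one,
    div_self (qPochhammer_ne_zero hY a)]

lemma gaussBinom_succ_succ (hY : ¬IsOfFinOrder Y) {n j : ℕ} (hj : j < n) :
    gaussBinom Y (n + 1) (j + 1) = gaussBinom Y n j + Y ^ (j + 1) * gaussBinom Y n (j + 1) := by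
  obtain ⟨m, rfl⟩ := Nat.exists_eq_add_of_lt hj
  rw [gaussBinom_eq_div hY (by omega), gaussBinom_eq_div hY (by omega),
    gaussBinom_eq_div hY (by omega), show j + m + 1 + 1 - (j + 1) = m + 1 by omega,
    show j + m + 1 - j = m + 1 by omega, show j + m + 1 - (j + 1) = m by omega,
    qPochhammer_succ (j + m + 1), qPochhammer_succ j, qPochhammer_succ m]
  have := qPochhammer_ne_zero hY j
  have := qPochhammer_ne_zero hY m
  have := one_sub_pow_ne_zero_of_not_isOfFinOrder hY (i := j + 1) (by omega)
  have := one_sub_pow_ne_zero_of_not_isOfFinOrder hY (i := m + 1) (by omega)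
  field_simp
  ring

lemma gaussBinom_mul_gaussBinom (hY : ¬IsOfFinOrder Y) {n k j : ℕ} (hjk : j ≤ k) (hkn : k ≤ n) :
    gaussBinom Y n k * gaussBinom Y k j = gaussBinom Y n j * gaussBinom Y (n - j) (k - j) := by
  rw [gaussBinom_eq_div hY hkn, gaussBinom_eq_div hY hjk, gaussBinom_eq_div hY (hjk.trans hkn),
    gaussBinom_eq_div hY (by omega), show n - j - (k - j) = n - k by omega]
  have := qPochhammer_ne_zero hY k
  have := qPochhammer_ne_zero hY (n - j)
  have := qPochhammer_ne_zero hY j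
  have := qPochhammer_ne_zero hY (k - j)
  have := qPochhammer_ne_zero hY (n - k)
  field_simp

lemma gaussBinom_inv (hY : ¬IsOfFinOrder Y) (hY0 : Y ≠ 0) {a b : ℕ} (hb : b ≤ a) :
    gaussBinom Y⁻¹ a b = (Y ^ (b * (a - b)))⁻¹ * gaussBinom Y a b := by
  obtain ⟨c, rfl⟩ := Nat.exists_eq_add_of_le hb
  rw [gaussBinom_eq_div (not_isOfFinOrder_inv hY) hb, gaussBinom_eq_div hY hb,
    Nat.add_sub_cancel_left, qPochhammer_inv hY0, qPochhammer_inv hY0, qPochhammer_inv hY0,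
    show b + c + 1 = (b + 1) + c by ring, Nat.choose_two_add, Nat.choose_succ_succ' c,
    Nat.choose_one_right]
  have := qPochhammer_ne_zero hY b
  have := qPochhammer_ne_zero hY c
  field_simp
  ring

lemma alternating_gaussBinom_succ_succ (hY : ¬IsOfFinOrder Y) {n j : ℕ} (hj : j < n) :
    (-1) ^ (j + 1) * Y ^ (n + 1 - (j + 1)).choose 2 * gaussBinom Y (n + 1) (j + 1) =
      -((-1) ^ j * Y ^ (n - j).choose 2 * gaussBinom Y n j) +
        Y ^ n * ((-1) ^ (j + 1) * Y ^ (n - (j + 1)).choose 2 * gaussBinom Y n (j + 1)) := by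
  obtain ⟨m, rfl⟩ := Nat.exists_eq_add_of_lt hj
  rw [gaussBinom_succ_succ hY hj, show j + m + 1 + 1 - (j + 1) = m + 1 by omega,
    show j + m + 1 - j = m + 1 by omega, show j + m + 1 - (j + 1) = m by omega,
    Nat.choose_succ_succ', Nat.choose_one_right]
  ring

lemma sum_range_alternating_gaussBinom_eq_zero (hY : ¬IsOfFinOrder Y) {n : ℕ} (hn : 0 < n) :
    ∑ k ∈ range (n + 1), (-1) ^ k * Y ^ (n - k).choose 2 * gaussBinom Y n k = 0 := by
  induction n with
  | zero => omega
  | succ n ih =>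
    set A := ∑ k ∈ range (n + 1), (-1) ^ k * Y ^ (n - k).choose 2 * gaussBinom Y n k
    suffices hrec : ∑ k ∈ range (n + 2), (-1) ^ k * Y ^ (n + 1 - k).choose 2 *
        gaussBinom Y (n + 1) k = (Y ^ n - 1) * A by
      rcases Nat.eq_zero_or_pos n with rfl | hn'
      · simpa [A, gaussBinom_zero_right] using hrec
      · rw [hrec, ih hn', mul_zero]
    have hA_top : A = ∑ j ∈ range n, (-1) ^ j * Y ^ (n - j).choose 2 * gaussBinom Y n j +
        (-1) ^ n := by
      simp [A, sum_range_succ, gaussBinom_self hY]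
    have hA_bot : A = ∑ j ∈ range n, (-1) ^ (j + 1) * Y ^ (n - (j + 1)).choose 2 *
        gaussBinom Y n (j + 1) + Y ^ n.choose 2 := by
      simp [A, sum_range_succ', gaussBinom_zero_right]
    rw [sum_range_succ, sum_range_succ', sum_congr rfl fun j hj =>
      alternating_gaussBinom_succ_succ hY (mem_range.1 hj), sum_add_distrib, sum_neg_distrib,
      ← mul_sum, gaussBinom_self hY, gaussBinom_zero_right, Nat.sub_self, Nat.sub_zero,
      Nat.choose_succ_succ' n, Nat.choose_one_right, Nat.choose_zero_succ]
    linear_combination hA_top - Y ^ n * hA_bot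

lemma sum_Ico_alternating_gaussBinom_mul_gaussBinom (hY : ¬IsOfFinOrder Y) {n j : ℕ}
    (hj : j < n) :
    ∑ k ∈ Ico j n, (-1) ^ k * Y ^ (n - k).choose 2 * gaussBinom Y n k * gaussBinom Y k j =
      -(-1) ^ n * gaussBinom Y n j := by
  obtain ⟨m, rfl⟩ := Nat.exists_eq_add_of_lt hj
  have hm := sum_range_alternating_gaussBinom_eq_zero hY (n := m + 1) (Nat.succ_pos m)
  rw [sum_range_succ, Nat.sub_self, Nat.choose_zero_succ, gaussBinom_self hY] at hm
  rw [sum_Ico_eq_sum_range, show j + m + 1 - j = m + 1 by omega]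
  calc ∑ i ∈ range (m + 1), (-1) ^ (j + i) * Y ^ (j + m + 1 - (j + i)).choose 2 *
          gaussBinom Y (j + m + 1) (j + i) * gaussBinom Y (j + i) j
      = (-1) ^ j * gaussBinom Y (j + m + 1) j *
          ∑ i ∈ range (m + 1), (-1) ^ i * Y ^ (m + 1 - i).choose 2 * gaussBinom Y (m + 1) i := by
        rw [mul_sum]
        refine sum_congr rfl fun i hi => ?_
        rw [mul_assoc _ (gaussBinom Y _ _), gaussBinom_mul_gaussBinom hY (by omega)
          (by simp only [mem_range] at hi; omega), show j + m + 1 - j = m + 1 by omega, Nat.add_sub_cancel_left,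
          show j + m + 1 - (j + i) = m + 1 - i by omega, pow_add]
        ring
    _ = -(-1) ^ (j + m + 1) * gaussBinom Y (j + m + 1) j := by
        rw [add_assoc j m 1, pow_add (-1 : K) j]
        linear_combination (-1) ^ j * gaussBinom Y (j + m + 1) j * hm

end GaussBinom

section GaussMultinomSum

variable {K : Type*} [Field K] {Y : K}

lemma gaussMultinom_insert {n k : ℕ} {I : Finset ℕ} (hk : ∀ i ∈ I, i < k) :
    gaussMultinom Y n (insert k I) = gaussBinom Y n k * gaussMultinom Y k I := by
  rw [gaussMultinom, gaussMultinom, reverse_sort_le, reverse_sort_le,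
    sort_insert _ (fun i hi => (hk i hi).le) (fun h => (hk k h).false), gaussMultinomAux]

variable (Y) in
def gaussMultinomSum (h : ℕ) (x : ℕ → K) : K :=
  ∑ I ∈ (Icc 1 (h - 1)).powerset, gaussMultinom Y h I * ∏ i ∈ I, x i

variable (Y) in
lemma gaussMultinomSum_eq_one_add_sum (h : ℕ) (x : ℕ → K) :
    gaussMultinomSum Y h x =
      1 + ∑ k ∈ Ico 1 h, gaussBinom Y h k * x k * gaussMultinomSum Y k x := by
  have hIcc : ∀ n, Icc 1 (n - 1) = Ico 1 n := fun n => by ext; simp only [mem_Icc, mem_Ico]; omega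
  rw [gaussMultinomSum, hIcc, sum_powerset_Ico_eq_add_sum_insert]
  simp only [gaussMultinomSum, hIcc]
  congr 1
  · simp [gaussMultinom, gaussMultinomAux]
  refine sum_congr rfl fun k _ => ?_
  rw [mul_sum]
  refine sum_congr rfl fun I hI => ?_
  have hlt : ∀ i ∈ I, i < k := fun i hi => (mem_Ico.1 (mem_powerset.1 hI hi)).2
  rw [gaussMultinom_insert hlt, prod_insert fun hk => (hlt k hk).false]
  ring

lemma one_add_mul_gaussMultinomSum (hY : ¬IsOfFinOrder Y) (x : ℕ → K) {k : ℕ} (hk : 0 < k) :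
    (1 + x k) * gaussMultinomSum Y k x =
      1 + ∑ j ∈ Ico 1 (k + 1), gaussBinom Y k j * x j * gaussMultinomSum Y j x := by
  rw [sum_Ico_succ_top hk, gaussBinom_self hY, ← add_assoc,
    ← gaussMultinomSum_eq_one_add_sum]
  ring

lemma alternating_sum_one_add_mul_gaussMultinomSum (hY : ¬IsOfFinOrder Y) (x : ℕ → K) {h : ℕ}
    (hh : 0 < h) :
    Y ^ h.choose 2 + ∑ k ∈ Ico 1 h, (-1) ^ k * Y ^ (h - k).choose 2 * gaussBinom Y h k *
        ((1 + x k) * gaussMultinomSum Y k x) = -(-1) ^ h * gaussMultinomSum Y h x := by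
  set c : ℕ → K := fun k => (-1) ^ k * Y ^ (h - k).choose 2 * gaussBinom Y h k
  set T : ℕ → K := fun j => x j * gaussMultinomSum Y j x
  have hconst : Y ^ h.choose 2 + ∑ k ∈ Ico 1 h, c k = -(-1) ^ h := by
    have h0 := sum_Ico_alternating_gaussBinom_mul_gaussBinom hY hh
    simp only [gaussBinom_zero_right, mul_one] at h0
    rwa [sum_eq_sum_Ico_succ_bot hh, pow_zero, one_mul, Nat.sub_zero, gaussBinom_zero_right,
      mul_one] at h0
  have hcoef : ∀ j ∈ Ico 1 h, ∑ k ∈ Ico j h, c k * gaussBinom Y k j * T j =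
      -(-1) ^ h * gaussBinom Y h j * T j := fun j hj => by
    rw [← sum_mul, sum_Ico_alternating_gaussBinom_mul_gaussBinom hY (mem_Ico.1 hj).2]
  calc Y ^ h.choose 2 + ∑ k ∈ Ico 1 h, c k * ((1 + x k) * gaussMultinomSum Y k x)
      = Y ^ h.choose 2 + ∑ k ∈ Ico 1 h, c k * (1 + ∑ j ∈ Ico 1 (k + 1),
          gaussBinom Y k j * T j) := by
        refine congrArg _ (sum_congr rfl fun k hk => ?_)
        rw [one_add_mul_gaussMultinomSum hY x (mem_Ico.1 hk).1]
        simp only [T, mul_assoc]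
    _ = (Y ^ h.choose 2 + ∑ k ∈ Ico 1 h, c k) +
          ∑ k ∈ Ico 1 h, ∑ j ∈ Ico 1 (k + 1), c k * gaussBinom Y k j * T j := by
        simp only [mul_add, mul_one, mul_sum, sum_add_distrib, mul_assoc]
        ring
    _ = -(-1) ^ h + ∑ j ∈ Ico 1 h, ∑ k ∈ Ico j h, c k * gaussBinom Y k j * T j := by
        rw [hconst, sum_comm' (t' := Ico 1 h) (s' := fun j => Ico j h) fun k j => by
          simp only [mem_Ico]; omega]
    _ = -(-1) ^ h * gaussMultinomSum Y h x := by
        rw [sum_congr rfl hcoef, gaussMultinomSum_eq_one_add_sum Y h x, mul_add, mul_one,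
          mul_sum]
        simp only [T, mul_assoc]

theorem gaussMultinomSum_inv (hY : ¬IsOfFinOrder Y) (hY0 : Y ≠ 0) (x : ℕ → K) {h : ℕ}
    (hh : 0 < h) :
    gaussMultinomSum Y⁻¹ h (fun i => -1 - x i) =
      -(-1) ^ h * (Y ^ h.choose 2)⁻¹ * gaussMultinomSum Y h x := by
  induction h using Nat.strong_induction_on with
  | _ h ih =>
  have hterm : ∀ k ∈ Ico 1 h, gaussBinom Y⁻¹ h k * (-1 - x k) *
        gaussMultinomSum Y⁻¹ k (fun i => -1 - x i) =
      (Y ^ h.choose 2)⁻¹ * ((-1) ^ k * Y ^ (h - k).choose 2 * gaussBinom Y h k *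
        ((1 + x k) * gaussMultinomSum Y k x)) := fun k hk => by
    obtain ⟨hk1, hkh⟩ := mem_Ico.1 hk
    rw [gaussBinom_inv hY hY0 hkh.le, ih k hkh hk1]
    obtain ⟨m, rfl⟩ := Nat.exists_eq_add_of_le hkh.le
    rw [Nat.choose_two_add, Nat.add_sub_cancel_left]
    field_simp
    ring
  rw [gaussMultinomSum_eq_one_add_sum, sum_congr rfl hterm, ← mul_sum, mul_right_comm,
    ← alternating_sum_one_add_mul_gaussMultinomSum hY x hh, add_mul,
    mul_inv_cancel₀ (pow_ne_zero _ hY0), mul_comm]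

end GaussMultinomSum

section IgusaCirc

variable {K : Type*} [Field K]

lemma igusaCirc_eq (h : ℕ) (Y : K) (X : ℕ → K) :
    igusaCirc h Y X = X h * (1 - X h)⁻¹ * gaussMultinomSum Y h (fun i => X i / (1 - X i)) := by
  rw [igusaCirc, igusa, gaussMultinomSum, mul_assoc]

lemma inv_div_one_sub_inv_s8 {x : K} (hx0 : x ≠ 0) (hx1 : x ≠ 1) :
    x⁻¹ / (1 - x⁻¹) = -1 - x / (1 - x) := by
  have : 1 - x ≠ 0 := sub_ne_zero.2 (Ne.symm hx1)
  have : x - 1 ≠ 0 := sub_ne_zero.2 hx1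
  field_simp
  ring

theorem igusaCirc_inv {Y : K} (hY : ¬IsOfFinOrder Y) (hY0 : Y ≠ 0) {X : ℕ → K}
    (hX0 : ∀ i, X i ≠ 0) (hX1 : ∀ i, X i ≠ 1) {h : ℕ} (hh : 0 < h) :
    igusaCirc h Y⁻¹ (fun i => (X i)⁻¹) =
      (-1) ^ h * (X h)⁻¹ * (Y ^ h.choose 2)⁻¹ * igusaCirc h Y X := by
  rw [igusaCirc_eq, igusaCirc_eq,
    funext fun i => inv_div_one_sub_inv_s8 (hX0 i) (hX1 i), gaussMultinomSum_inv hY hY0 _ hh]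
  have := hX0 h
  have : 1 - X h ≠ 0 := sub_ne_zero.2 (Ne.symm (hX1 h))
  have : X h - 1 ≠ 0 := sub_ne_zero.2 (hX1 h)
  field_simp
  ring

end IgusaCirc

lemma MvPolynomial.not_isOfFinOrder_algebraMap_X {σ R : Type*} [CommRing R] [IsDomain R]
    (i : σ) :
    ¬IsOfFinOrder (algebraMap (MvPolynomial σ R) (FractionRing (MvPolynomial σ R)) (X i)) := by
  rw [isOfFinOrder_iff_pow_eq_one]
  rintro ⟨n, hn, hXn⟩
  rw [← map_pow, ← map_one (algebraMap (MvPolynomial σ R) _)] at hXn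
  have := congrArg constantCoeff (IsFractionRing.injective _ _ hXn)
  simp [hn.ne'] at this

/-- Functional equation for the Igusa function `I_h^∘`:
`I_h^∘(Y⁻¹; X_1⁻¹,…,X_h⁻¹) = (-1)^h · X_h⁻¹ · Y^{-h(h-1)/2} · I_h^∘(Y; X_1,…,X_h)`
in the field of rational functions `ℚ(Y, X_1, …, X_h)` (here `Y` is the variable with
index `0` and `X_i` the variable with index `i`). -/
theorem igusaCirc_funEq (h : ℕ) (hh : 0 < h) :
    igusaCirc h
        (algebraMap (MvPolynomial ℕ ℚ) (FractionRing (MvPolynomial ℕ ℚ))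
          (MvPolynomial.X 0))⁻¹
        (fun i => (algebraMap (MvPolynomial ℕ ℚ) (FractionRing (MvPolynomial ℕ ℚ))
          (MvPolynomial.X i))⁻¹) =
      (-1) ^ h *
        (algebraMap (MvPolynomial ℕ ℚ) (FractionRing (MvPolynomial ℕ ℚ))
            (MvPolynomial.X h))⁻¹ *
        (algebraMap (MvPolynomial ℕ ℚ) (FractionRing (MvPolynomial ℕ ℚ))
            (MvPolynomial.X 0) ^ (h * (h - 1) / 2))⁻¹ *
        igusaCirc h
          (algebraMap (MvPolynomial ℕ ℚ) (FractionRing (MvPolynomial ℕ ℚ))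
            (MvPolynomial.X 0))
          (fun i => algebraMap (MvPolynomial ℕ ℚ) (FractionRing (MvPolynomial ℕ ℚ))
            (MvPolynomial.X i)) := by
  have hX0 : ∀ i, algebraMap (MvPolynomial ℕ ℚ) (FractionRing (MvPolynomial ℕ ℚ))
      (MvPolynomial.X i) ≠ 0 := fun i =>
    (map_ne_zero_iff _ (IsFractionRing.injective _ _)).2 (MvPolynomial.X_ne_zero i)
  have hX1 : ∀ i, algebraMap (MvPolynomial ℕ ℚ) (FractionRing (MvPolynomial ℕ ℚ))
      (MvPolynomial.X i) ≠ 1 := fun i hXi =>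
    MvPolynomial.not_isOfFinOrder_algebraMap_X i (hXi ▸ IsOfFinOrder.one)
  simpa only [Nat.choose_two_right] using
    igusaCirc_inv (MvPolynomial.not_isOfFinOrder_algebraMap_X 0) (hX0 0) hX0 hX1 hh
end
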